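/- arXiv:1709.02761 — 5 statements merged into one kernel-verified Lean document; each statement's English description precedes it below -/
import Mathlib

section
/- Let d ≥ 1 be an integer coprime to q. Then the group E_d(K) contains no element of order 2. -/
/-!
A point of order two satisfies `y = -y - x + t^d`; substituting into the curve equation gives
`x³ = -y²`, and then `u = -2y/x` satisfies `u³ - u² = 4 t^d`. Such a `u` is integral over
`𝔽_q[t]`, hence a polynomial, and `u² (u - 1) = 4 t^d` is impossible in `𝔽_q[t]`: one of the
coprime factors `u`, `u - 1` is prime to `t`, so it divides the unit `4` and `u` is constant.
-/

open Polynomial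

namespace Polynomial

variable {F : Type*} [Field F]

theorem natDegree_eq_zero_of_dvd_C_mul_X_pow {b : F[X]} {c : F} (hc : c ≠ 0) {d : ℕ}
    (hb : ¬X ∣ b) (h : b ∣ C c * X ^ d) : b.natDegree = 0 := by
  have hcop : IsCoprime b (X ^ d) := ((prime_X.coprime_iff_not_dvd.mpr hb).symm).pow_right
  simpa using natDegree_le_of_dvd (hcop.dvd_of_dvd_mul_right h) (C_ne_zero.mpr hc)

theorem sq_mul_sub_one_ne_C_mul_X_pow {c : F} (hc : c ≠ 0) {d : ℕ} (hd : d ≠ 0) (a : F[X]) :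
    a ^ 2 * (a - 1) ≠ C c * X ^ d := by
  intro h
  have ha : a.natDegree = 0 := by
    by_cases hXa : X ∣ a
    · have hXa1 : ¬X ∣ a - 1 := fun hXa1 ↦
        prime_X.not_dvd_one (by simpa using dvd_sub hXa hXa1)
      have := natDegree_eq_zero_of_dvd_C_mul_X_pow hc hXa1 ⟨a ^ 2, by rw [← h]; ring⟩
      rwa [← C_1, natDegree_sub_C] at this
    · exact natDegree_eq_zero_of_dvd_C_mul_X_pow hc hXa ⟨a * (a - 1), by rw [← h]; ring⟩
  have := congrArg natDegree h
  rw [eq_C_of_natDegree_eq_zero ha, natDegree_C_mul_X_pow d c hc] at this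
  simp only [← C_pow, ← C_1, ← C_sub, ← C_mul, natDegree_C] at this
  exact hd this.symm

end Polynomial

namespace RatFunc

variable {F : Type*} [Field F]

theorem cube_sub_sq_ne_C_mul_X_pow {c : F} (hc : c ≠ 0) {d : ℕ} (hd : d ≠ 0) (u : RatFunc F) :
    u ^ 3 - u ^ 2 ≠ C c * X ^ d := by
  intro h
  have hcX : algebraMap F[X] (RatFunc F) (.C c * .X ^ d) = C c * X ^ d := by
    rw [map_mul, map_pow, algebraMap_X, algebraMap_C]
  have hint : IsIntegral F[X] u := by
    refine ⟨.X ^ 3 - .X ^ 2 - .C (.C c * .X ^ d), by monicity!, ?_⟩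
    simp only [eval₂_sub, eval₂_pow, eval₂_X, eval₂_C, hcX, h, sub_self]
  obtain ⟨a, rfl⟩ := IsIntegrallyClosed.isIntegral_iff.mp hint
  refine Polynomial.sq_mul_sub_one_ne_C_mul_X_pow hc hd a
    (IsFractionRing.injective F[X] (RatFunc F) ?_)
  rw [hcX, ← h]
  simp only [map_mul, map_pow, map_sub, map_one]
  ring

end RatFunc

namespace WeierstrassCurve

def hessian {K : Type*} [CommRing K] (T : K) : WeierstrassCurve.Affine K :=
  { a₁ := 1, a₂ := 0, a₃ := -T, a₄ := 0, a₆ := 0 }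

variable {K : Type*} [Field K] {T : K}

theorem hessian_cube_sub_sq_eq_of_negY_eq (hT : T ≠ 0) {x y : K} (h : (hessian T).Equation x y)
    (hy : (hessian T).negY x y = y) : (-2 * y / x) ^ 3 - (-2 * y / x) ^ 2 = 4 * T := by
  rw [Affine.equation_iff] at h
  simp only [hessian, Affine.negY] at h hy
  have hx3 : x ^ 3 = -y ^ 2 := by linear_combination -h - y * hy
  have hx : x ≠ 0 := by
    rintro rfl
    have hy0 : y = 0 := pow_eq_zero_iff two_ne_zero |>.mp (by linear_combination hx3)
    exact hT (by linear_combination hy + 2 * hy0)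
  field_simp
  linear_combination (4 * y ^ 2) * hy - (4 * T) * hx3

theorem hessian_exists_cube_sub_sq_eq_of_addOrderOf_eq_two [DecidableEq K] (hT : T ≠ 0)
    {P : (hessian T).Point} (hP : addOrderOf P = 2) : ∃ u : K, u ^ 3 - u ^ 2 = 4 * T := by
  cases P with
  | zero => simp [← Affine.Point.zero_def] at hP
  | @some _ _ h =>
    have hneg := neg_eq_self_of_addOrderOf_eq_two hP
    rw [Affine.Point.neg_some, Affine.Point.some.injEq] at hneg
    exact ⟨_, hessian_cube_sub_sq_eq_of_negY_eq hT h.1 hneg.2⟩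

end WeierstrassCurve

open scoped Classical in
theorem hessian_no_two_torsion_general (p : ℕ) (hp5 : 5 ≤ p)
    (F : Type) [Field F] [CharP F p]
    (d : ℕ) (hd : 1 ≤ d)
    (W : WeierstrassCurve.Affine (RatFunc F))
    (hW : W = { a₁ := 1, a₂ := 0, a₃ := -(RatFunc.X ^ d), a₄ := 0, a₆ := 0 }) :
    ∀ P : W.Point, addOrderOf P ≠ 2 := by
  intro P hP
  subst hW
  have h4 : (4 : F) ≠ 0 := by
    rw [← Nat.cast_ofNat, Ne, CharP.cast_eq_zero_iff F p]
    exact fun h ↦ by have := Nat.le_of_dvd four_pos h; omega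
  obtain ⟨u, hu⟩ := WeierstrassCurve.hessian_exists_cube_sub_sq_eq_of_addOrderOf_eq_two
    (pow_ne_zero d (RatFunc.X_ne_zero (K := F))) hP
  exact RatFunc.cube_sub_sq_ne_C_mul_X_pow h4 (Nat.one_le_iff_ne_zero.mp hd) u
    (by rw [hu, map_ofNat])

open scoped Classical in
/-- **No 2-torsion on the Hessian curve.**  For `d ≥ 1` coprime to `q`, the group `E_d(K)`
of `K`-rational points on the Hessian elliptic curve `E_d : y² + xy - t^d y = x³` over
`K = 𝔽_q(t)` contains no element of order `2`. -/
theorem hessian_no_two_torsion (p : ℕ) (hp : p.Prime) (hp5 : 5 ≤ p)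
    (F : Type) [Field F] [Fintype F] [CharP F p]
    (d : ℕ) (hd : 1 ≤ d) (hcop : Nat.Coprime d (Fintype.card F))
    (W : WeierstrassCurve.Affine (RatFunc F))
    (hW : W = { a₁ := 1, a₂ := 0, a₃ := -(RatFunc.X ^ d), a₄ := 0, a₆ := 0 }) :
    ∀ P : W.Point, addOrderOf P ≠ 2 :=
  hessian_no_two_torsion_general p hp5 F d hd W hW
end

section
/- Let F be a finite field of odd characteristic with quadratic character λ, and let χ be a nontrivial multiplicative character of F. Then Σ_{z∈F} Σ_{x∈F} χ(z)·λ(x³ + x² − 8zx + 16z²) = χ(−1)·j_F(χ, χ, χ). -/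
open Finset

/-- The Jacobi sum `j_F(χ₁, χ₂, χ₃) = ∑_{x₁+x₂+x₃=1} χ₁(x₁)·χ₂(x₂)·χ₃(x₃)` attached to three
multiplicative characters of a finite field `F`. -/
noncomputable def jacobiSum₃ {F : Type*} [Field F] [Fintype F] [DecidableEq F]
    (χ₁ χ₂ χ₃ : MulChar F ℂ) : ℂ :=
  ∑ v ∈ Finset.univ.filter (fun v : F × F × F => v.1 + v.2.1 + v.2.2 = 1),
    χ₁ v.1 * χ₂ v.2.1 * χ₃ v.2.2


lemma lam_eq_quadChar {F : Type*} [Field F] [Fintype F] [DecidableEq F]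
    (lam : MulChar F ℂ) (hlam : orderOf lam = 2) (a : F) :
    lam a = ((quadraticChar F a : ℤ) : ℂ) := by
  have hlam2 : lam ^ 2 = 1 := hlam ▸ pow_orderOf_eq_one lam
  have hlam1 : lam ≠ 1 := by
    rintro rfl
    simp [orderOf_one] at hlam
  have hsq : ∀ b : F, b ≠ 0 → lam b * lam b = 1 := by
    intro b hb
    have h1 : lam b * lam b = (lam ^ 2) b := by
      rw [MulChar.pow_apply' lam (by norm_num) b, sq]
    rw [h1, hlam2, MulChar.one_apply (isUnit_iff_ne_zero.mpr hb)]
  have hsquare : ∀ b : F, b ≠ 0 → IsSquare b → lam b = 1 := by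
    rintro b hb ⟨c, rfl⟩
    have hc : c ≠ 0 := by rintro rfl; simp at hb
    rw [map_mul]; exact hsq c hc
  by_cases ha : a = 0
  · subst ha
    rw [MulChar.map_nonunit lam not_isUnit_zero, quadraticChar_zero]
    norm_num
  by_cases hs : IsSquare a
  · rw [(quadraticChar_one_iff_isSquare ha).mpr hs, hsquare a ha hs]; norm_num
  · rw [quadraticChar_neg_one_iff_not_isSquare.mpr hs]
    rcases mul_self_eq_one_iff.mp (hsq a ha) with h1 | h1
    · exfalso
      refine hlam1 (MulChar.eq_one_iff.mpr fun u => ?_)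
      by_cases hu : IsSquare (u : F)
      · exact hsquare _ (Units.ne_zero u) hu
      · have hau : a * (u : F) ≠ 0 := mul_ne_zero ha (Units.ne_zero u)
        have hsq2 : IsSquare (a * (u : F)) := by
          rw [← quadraticChar_one_iff_isSquare hau, map_mul,
            quadraticChar_neg_one_iff_not_isSquare.mpr hs,
            quadraticChar_neg_one_iff_not_isSquare.mpr hu]
          ring
        have h2 : lam (a * u) = 1 := hsquare _ hau hsq2
        rw [map_mul, h1, one_mul] at h2
        exact h2
    · rw [h1]; norm_num

lemma lam_count {F : Type*} [Field F] [Fintype F] [DecidableEq F]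
    (hodd : ringChar F ≠ 2)
    (lam : MulChar F ℂ) (hlam : orderOf lam = 2) (c : F) :
    lam c = (∑ y : F, if y ^ 2 = c then (1 : ℂ) else 0) - 1 := by
  have h := quadraticChar_card_sqrts hodd c
  have hset : ({x : F | x ^ 2 = c}).toFinset = Finset.univ.filter (fun y : F => y ^ 2 = c) := by
    ext y; simp
  rw [hset] at h
  have h2 : (∑ y : F, if y ^ 2 = c then (1 : ℂ) else 0)
      = ((Finset.univ.filter (fun y : F => y ^ 2 = c)).card : ℂ) := by
    rw [Finset.sum_boole]
  rw [lam_eq_quadChar lam hlam c, h2]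
  have h3 : ((Finset.univ.filter (fun y : F => y ^ 2 = c)).card : ℂ)
      = ((quadraticChar F c : ℤ) : ℂ) + 1 := by
    exact_mod_cast congrArg (fun n : ℤ => (n : ℂ)) h
  rw [h3]; ring


private lemma stepE2 {F : Type*} [Field F] [Fintype F] [DecidableEq F]
    (lam χ : MulChar F ℂ) (h4 : (4 : F) ≠ 0) :
    (∑ x : F, ∑ u : F, χ (u + x) * lam (u ^ 2 + x ^ 3))
      = χ 4 * ∑ z : F, ∑ x : F, χ z * lam (x ^ 3 + x ^ 2 - 8 * z * x + 16 * z ^ 2) := by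
  have hbij : ∀ x : F, Function.Bijective (fun z : F => 4 * z - x) := by
    intro x
    refine Finite.injective_iff_bijective.mp fun z1 z2 h => ?_
    simp only [sub_left_inj] at h
    exact mul_left_cancel₀ h4 h
  calc (∑ x : F, ∑ u : F, χ (u + x) * lam (u ^ 2 + x ^ 3))
      = ∑ x : F, ∑ z : F, χ (4 * z - x + x) * lam ((4 * z - x) ^ 2 + x ^ 3) := by
        refine Finset.sum_congr rfl fun x _ => ?_
        exact (Fintype.sum_bijective (fun z : F => 4 * z - x) (hbij x)
          (fun z => χ (4 * z - x + x) * lam ((4 * z - x) ^ 2 + x ^ 3))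
          (fun u => χ (u + x) * lam (u ^ 2 + x ^ 3)) (fun z => rfl)).symm
    _ = ∑ x : F, ∑ z : F, χ 4 * (χ z * lam (x ^ 3 + x ^ 2 - 8 * z * x + 16 * z ^ 2)) := by
        refine Finset.sum_congr rfl fun x _ => Finset.sum_congr rfl fun z _ => ?_
        rw [show 4 * z - x + x = 4 * z by ring,
          show (4 * z - x) ^ 2 + x ^ 3 = x ^ 3 + x ^ 2 - 8 * z * x + 16 * z ^ 2 by ring,
          map_mul]
        ring
    _ = χ 4 * ∑ x : F, ∑ z : F, χ z * lam (x ^ 3 + x ^ 2 - 8 * z * x + 16 * z ^ 2) := by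
        simp_rw [← Finset.mul_sum]
    _ = χ 4 * ∑ z : F, ∑ x : F, χ z * lam (x ^ 3 + x ^ 2 - 8 * z * x + 16 * z ^ 2) := by
        rw [Finset.sum_comm]


private lemma stepE3 {F : Type*} [Field F] [Fintype F] [DecidableEq F]
    (lam χ : MulChar F ℂ)
    (hcount : ∀ c : F, lam c = (∑ y : F, if y ^ 2 = c then (1 : ℂ) else 0) - 1)
    (hEzero : ∀ x : F, (∑ u : F, χ (u + x)) = 0) :
    (∑ x : F, ∑ u : F, χ (u + x) * lam (u ^ 2 + x ^ 3))
      = ∑ x : F, ∑ u : F, ∑ y : F, (if y ^ 2 = u ^ 2 + x ^ 3 then χ (u + x) else 0) := by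
  refine Finset.sum_congr rfl fun x _ => ?_
  have key : ∀ u : F, χ (u + x) * lam (u ^ 2 + x ^ 3)
      = (∑ y : F, if y ^ 2 = u ^ 2 + x ^ 3 then χ (u + x) else 0) - χ (u + x) := by
    intro u
    rw [hcount, mul_sub, mul_one, Finset.mul_sum]
    congr 1
    exact Finset.sum_congr rfl fun y _ => by rw [mul_ite, mul_one, mul_zero]
  calc (∑ u : F, χ (u + x) * lam (u ^ 2 + x ^ 3))
      = (∑ u : F, ((∑ y : F, if y ^ 2 = u ^ 2 + x ^ 3 then χ (u + x) else 0) - χ (u + x))) :=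
        Finset.sum_congr rfl fun u _ => key u
    _ = (∑ u : F, ∑ y : F, if y ^ 2 = u ^ 2 + x ^ 3 then χ (u + x) else 0) - ∑ u : F, χ (u + x) :=
        Finset.sum_sub_distrib _ _
    _ = ∑ u : F, ∑ y : F, (if y ^ 2 = u ^ 2 + x ^ 3 then χ (u + x) else 0) := by
        rw [hEzero x, sub_zero]

private lemma stepE4 {F : Type*} [Field F] [Fintype F] [DecidableEq F]
    (χ : MulChar F ℂ) (h2 : (2 : F) ≠ 0) :
    χ 2 * (∑ x : F, ∑ u : F, ∑ y : F, (if y ^ 2 = u ^ 2 + x ^ 3 then χ (u + x) else 0))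
      = ∑ x : F, ∑ p : F × F, (if p.1 * p.2 = x ^ 3 then χ (p.1 - p.2 + 2 * x) else 0) := by
  rw [Finset.mul_sum]
  refine Finset.sum_congr rfl fun x _ => ?_
  have hbij : Function.Bijective (fun q : F × F => (q.2 + q.1, q.2 - q.1)) := by
    refine Finite.injective_iff_bijective.mp fun q1 q2 h => ?_
    have h1 := congrArg Prod.fst h
    have hh2 := congrArg Prod.snd h
    simp only at h1 hh2
    have hy : q1.2 = q2.2 := by
      have : (2 : F) * q1.2 = 2 * q2.2 := by linear_combination h1 + hh2
      exact mul_left_cancel₀ h2 this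
    have hu : q1.1 = q2.1 := by linear_combination h1 - hy
    exact Prod.ext hu hy
  calc χ 2 * (∑ u : F, ∑ y : F, (if y ^ 2 = u ^ 2 + x ^ 3 then χ (u + x) else 0))
      = χ 2 * ∑ q : F × F, (if q.2 ^ 2 = q.1 ^ 2 + x ^ 3 then χ (q.1 + x) else 0) := by
        rw [Fintype.sum_prod_type]
    _ = ∑ q : F × F, χ 2 * (if q.2 ^ 2 = q.1 ^ 2 + x ^ 3 then χ (q.1 + x) else 0) :=
        Finset.mul_sum _ _ _
    _ = ∑ q : F × F,
          (if (q.2 + q.1) * (q.2 - q.1) = x ^ 3 then χ ((q.2 + q.1) - (q.2 - q.1) + 2 * x) else 0) := by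
        refine Finset.sum_congr rfl fun q _ => ?_
        have hc : ((q.2 + q.1) * (q.2 - q.1) = x ^ 3) ↔ (q.2 ^ 2 = q.1 ^ 2 + x ^ 3) := by
          constructor <;> intro h <;> linear_combination h
        have hv : (q.2 + q.1) - (q.2 - q.1) + 2 * x = 2 * (q.1 + x) := by ring
        rw [if_congr hc rfl rfl, hv, map_mul, mul_ite, mul_zero]
    _ = ∑ p : F × F, (if p.1 * p.2 = x ^ 3 then χ (p.1 - p.2 + 2 * x) else 0) :=
        Fintype.sum_bijective (fun q : F × F => (q.2 + q.1, q.2 - q.1)) hbij _ _ (fun q => rfl)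


private lemma stepE5 {F : Type*} [Field F] [Fintype F] [DecidableEq F]
    (χ : MulChar F ℂ) (hχ : χ ≠ 1) :
    (∑ x : F, ∑ p : F × F, (if p.1 * p.2 = x ^ 3 then χ (p.1 - p.2 + 2 * x) else 0))
      = ∑ t : F, ∑ w : F, χ t * χ w * χ (t - w + 2) := by
  have hA : (∑ x : F, ∑ p : F × F, (if p.1 * p.2 = x ^ 3 then χ (p.1 - p.2 + 2 * x) else 0))
      = ∑ v ∈ (univ : Finset (F × F × F)).filter (fun v => v.2.1 * v.2.2 = v.1 ^ 3),
          χ (v.2.1 - v.2.2 + 2 * v.1) := by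
    rw [Finset.sum_filter, Fintype.sum_prod_type]
  rw [hA]
  rw [← Finset.sum_filter_add_sum_filter_not
    ((univ : Finset (F × F × F)).filter (fun v => v.2.1 * v.2.2 = v.1 ^ 3))
    (fun v => v.1 ≠ 0) (fun v => χ (v.2.1 - v.2.2 + 2 * v.1))]
  have hzero : (∑ v ∈ (((univ : Finset (F × F × F)).filter
        (fun v => v.2.1 * v.2.2 = v.1 ^ 3)).filter (fun v => ¬v.1 ≠ 0)),
        χ (v.2.1 - v.2.2 + 2 * v.1)) = 0 := by
    rw [Finset.filter_filter, Finset.sum_filter, Fintype.sum_prod_type]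
    have hin : ∀ x : F,
        (∑ p : F × F, if p.1 * p.2 = x ^ 3 ∧ ¬x ≠ 0 then χ (p.1 - p.2 + 2 * x) else 0) = 0 := by
      intro x
      by_cases hx : x = 0
      · subst hx
        rw [Fintype.sum_prod_type]
        have inner : ∀ a : F,
            (∑ b : F, if a * b = (0:F) ^ 3 ∧ ¬(0:F) ≠ 0 then χ (a - b + 2 * 0) else 0) = χ a := by
          intro a
          by_cases ha : a = 0
          · subst ha
            have : ∀ b : F, (if (0:F) * b = (0:F) ^ 3 ∧ ¬(0:F) ≠ 0 then χ (0 - b + 2 * 0) else 0)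
                = χ (-1) * χ b := by
              intro b
              rw [if_pos (by norm_num), show (0:F) - b + 2 * 0 = (-1) * b by ring, map_mul]
            rw [Finset.sum_congr rfl fun b _ => this b, ← Finset.mul_sum,
              MulChar.sum_eq_zero_of_ne_one hχ, mul_zero,
              MulChar.map_nonunit χ not_isUnit_zero]
          · have : ∀ b : F, (if a * b = (0:F) ^ 3 ∧ ¬(0:F) ≠ 0 then χ (a - b + 2 * 0) else 0)
                = if b = 0 then χ (a - b + 2 * 0) else 0 := by
              intro b
              congr 1
              simp [mul_eq_zero, ha]
            rw [Finset.sum_congr rfl fun b _ => this b, Finset.sum_ite_eq' univ (0 : F)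
              (fun b => χ (a - b + 2 * 0)), if_pos (mem_univ _)]
            norm_num
        rw [Finset.sum_congr rfl fun a _ => inner a, MulChar.sum_eq_zero_of_ne_one hχ]
      · exact Finset.sum_eq_zero fun p _ => if_neg (fun hcon => hcon.2 hx)
    rw [Finset.sum_congr rfl fun x _ => hin x, Finset.sum_const_zero]
  rw [hzero, add_zero]
  -- main bijection
  rw [show (∑ t : F, ∑ w : F, χ t * χ w * χ (t - w + 2))
      = ∑ p : F × F, χ p.1 * χ p.2 * χ (p.1 - p.2 + 2) from (Fintype.sum_prod_type (f := fun p : F × F => χ p.1 * χ p.2 * χ (p.1 - p.2 + 2))).symm]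
  rw [← Finset.sum_filter_of_ne (p := fun p : F × F => p.1 ≠ 0 ∧ p.2 ≠ 0)
    (f := fun p : F × F => χ p.1 * χ p.2 * χ (p.1 - p.2 + 2)) (s := univ) ?side]
  case side =>
    intro p _ hne
    refine ⟨fun h0 => hne ?_, fun h0 => hne ?_⟩ <;>
      simp [h0, MulChar.map_nonunit χ not_isUnit_zero]
  refine Finset.sum_nbij' (i := fun v : F × F × F => (v.2.1 / v.1, v.1 ^ 2 / v.2.1))
    (j := fun p : F × F => (p.1 * p.2, p.1 ^ 2 * p.2, p.1 * p.2 ^ 2)) ?_ ?_ ?_ ?_ ?_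
  · intro v hv
    simp only [Finset.mem_filter, Finset.mem_univ, true_and] at hv ⊢
    obtain ⟨hP, hx⟩ := hv
    have ha : v.2.1 ≠ 0 := by
      intro h0
      rw [h0, zero_mul] at hP
      exact hx (pow_eq_zero_iff (by norm_num) |>.mp hP.symm)
    exact ⟨div_ne_zero ha hx, div_ne_zero (pow_ne_zero 2 hx) ha⟩
  · intro p hp
    simp only [Finset.mem_filter, Finset.mem_univ, true_and] at hp ⊢
    obtain ⟨ht, hw⟩ := hp
    exact ⟨by ring, mul_ne_zero ht hw⟩
  · intro v hv
    simp only [Finset.mem_filter, Finset.mem_univ, true_and] at hv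
    obtain ⟨hP, hx⟩ := hv
    have ha : v.2.1 ≠ 0 := by
      intro h0
      rw [h0, zero_mul] at hP
      exact hx (pow_eq_zero_iff (by norm_num) |>.mp hP.symm)
    obtain ⟨x, a, b⟩ := v
    simp only at hP hx ha ⊢
    refine Prod.ext ?_ (Prod.ext ?_ ?_) <;> simp only
    · field_simp
    · field_simp
    · field_simp
      linear_combination (-1 : F) * hP
  · intro p hp
    rw [Finset.mem_filter] at hp
    obtain ⟨-, ht, hw⟩ := hp
    obtain ⟨t, w⟩ := p
    simp only at ht hw ⊢
    refine Prod.ext ?_ ?_ <;> simp only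
    · field_simp
    · field_simp
  · intro v hv
    simp only [Finset.mem_filter, Finset.mem_univ, true_and] at hv
    obtain ⟨hP, hx⟩ := hv
    have ha : v.2.1 ≠ 0 := by
      intro h0
      rw [h0, zero_mul] at hP
      exact hx (pow_eq_zero_iff (by norm_num) |>.mp hP.symm)
    obtain ⟨x, a, b⟩ := v
    simp only at hP hx ha ⊢
    rw [← map_mul, ← map_mul]
    congr 1
    field_simp
    linear_combination (-1 : F) * hP

private lemma stepE6 {F : Type*} [Field F] [Fintype F] [DecidableEq F]
    (χ : MulChar F ℂ) (h2 : (2 : F) ≠ 0) :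
    (∑ t : F, ∑ w : F, χ t * χ w * χ (t - w + 2))
      = (χ (-2) * χ 2 * χ 2) * jacobiSum₃ χ χ χ := by
  rw [jacobiSum₃, Finset.mul_sum,
    show (∑ t : F, ∑ w : F, χ t * χ w * χ (t - w + 2))
      = ∑ p : F × F, χ p.1 * χ p.2 * χ (p.1 - p.2 + 2) from
      (Fintype.sum_prod_type (f := fun p : F × F => χ p.1 * χ p.2 * χ (p.1 - p.2 + 2))).symm]
  refine Finset.sum_nbij' (i := fun p : F × F => (-p.1 / 2, p.2 / 2, (p.1 - p.2 + 2) / 2))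
    (j := fun v : F × F × F => (-2 * v.1, 2 * v.2.1)) ?_ ?_ ?_ ?_ ?_
  · intro p _
    simp only [Finset.mem_filter, Finset.mem_univ, true_and]
    field_simp
    ring
  · intro v _
    exact mem_univ _
  · intro p _
    obtain ⟨t, w⟩ := p
    refine Prod.ext ?_ ?_ <;> simp only <;> field_simp
  · intro v hv
    simp only [Finset.mem_filter, Finset.mem_univ, true_and] at hv
    obtain ⟨p, q, r⟩ := v
    simp only at hv ⊢
    refine Prod.ext ?_ (Prod.ext ?_ ?_) <;> simp only <;> field_simp
    linear_combination (-1 : F) * hv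
  · intro p _
    obtain ⟨t, w⟩ := p
    simp only
    have e1 : (-2 : F) * (-t / 2) = t := by field_simp
    have e2 : (2 : F) * (w / 2) = w := by field_simp
    have e3 : (2 : F) * ((t - w + 2) / 2) = t - w + 2 := by field_simp
    calc χ t * χ w * χ (t - w + 2)
        = χ ((-2) * (-t / 2)) * χ (2 * (w / 2)) * χ (2 * ((t - w + 2) / 2)) := by
          rw [e1, e2, e3]
      _ = χ (-2) * χ 2 * χ 2 * (χ (-t / 2) * χ (w / 2) * χ ((t - w + 2) / 2)) := by
          rw [map_mul, map_mul, map_mul]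
          ring

/-- Let `F` be a finite field of odd characteristic with quadratic character `λ`, and let `χ`
be a nontrivial multiplicative character of `F`.  Then
`∑_{z ∈ F} ∑_{x ∈ F} χ(z)·λ(x³ + x² − 8zx + 16z²) = χ(−1)·j_F(χ, χ, χ)`. -/
theorem charSum_quadratic_eq_jacobiSum (F : Type*) [Field F] [Fintype F] [DecidableEq F]
    (hodd : ringChar F ≠ 2)
    (lam : MulChar F ℂ) (hlam : orderOf lam = 2)
    (χ : MulChar F ℂ) (hχ : χ ≠ 1) :
    ∑ z : F, ∑ x : F, χ z * lam (x ^ 3 + x ^ 2 - 8 * z * x + 16 * z ^ 2) =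
      χ (-1) * jacobiSum₃ χ χ χ := by
  have h2 : (2 : F) ≠ 0 := Ring.two_ne_zero hodd
  have h4 : (4 : F) ≠ 0 := by
    rw [show (4 : F) = 2 * 2 by norm_num]
    exact mul_ne_zero h2 h2
  have hχ2 : χ (2 : F) ≠ 0 := by
    have hu : χ (2 : F) * χ ((2 : F)⁻¹) = 1 := by
      rw [← map_mul, mul_inv_cancel₀ h2, MulChar.map_one]
    exact left_ne_zero_of_mul_eq_one hu
  have hEzero : ∀ x : F, (∑ u : F, χ (u + x)) = 0 := by
    intro x
    calc ∑ u : F, χ (u + x) = ∑ a : F, χ a :=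
          Fintype.sum_bijective (fun u : F => u + x) (Equiv.addRight x).bijective _ _ (fun u => rfl)
      _ = 0 := MulChar.sum_eq_zero_of_ne_one hχ
  have key : χ 2 * (χ 4 * ∑ z : F, ∑ x : F, χ z * lam (x ^ 3 + x ^ 2 - 8 * z * x + 16 * z ^ 2))
      = (χ (-2) * χ 2 * χ 2) * jacobiSum₃ χ χ χ := by
    rw [← stepE2 lam χ h4, stepE3 lam χ (fun c => lam_count hodd lam hlam c) hEzero,
      stepE4 χ h2, stepE5 χ hχ, stepE6 χ h2]
  have hm2 : χ (-2 : F) = χ (-1) * χ 2 := by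
    rw [show (-2 : F) = (-1) * 2 by ring, map_mul]
  have h42 : χ (4 : F) = χ 2 * χ 2 := by
    rw [show (4 : F) = 2 * 2 by norm_num, map_mul]
  have key2 : (χ 2 * χ 2 * χ 2) * (∑ z : F, ∑ x : F,
        χ z * lam (x ^ 3 + x ^ 2 - 8 * z * x + 16 * z ^ 2))
      = (χ 2 * χ 2 * χ 2) * (χ (-1) * jacobiSum₃ χ χ χ) := by
    rw [hm2, h42] at key
    linear_combination key
  exact mul_left_cancel₀ (mul_ne_zero (mul_ne_zero hχ2 hχ2) hχ2) key2
end

section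
/- Let F be a finite field of odd characteristic with quadratic character λ, and let a ∈ F^×. Then Σ_{x∈F} λ(x³ + a) = −λ(a)·Σ_ξ ξ(4a)·j_F(ξ, ξ, ξ), where the sum on the right ranges over the nontrivial multiplicative characters ξ of F satisfying ξ³ = 𝟙 (this sum is empty if 3 does not divide |F| − 1). -/
open Finset

/-!
For `u ≠ 0` the number of cube roots of `u` is `∑_{ξ³ = 1} ξ(u)`, so
`∑_x λ(x³ + a) = λ(a) + ∑_{ξ³ = 1} ∑_u ξ(u) λ(u + a)`, and the substitution `u = -a t` turns the
inner sum into `ξ(-a) λ(a) J(ξ, λ)`. The trivial character contributes `-λ(a)`, cancelling the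
first term. For a nontrivial cubic `ξ` one has `ξ(-1) = 1`, the duplication formula
`J(ξ, λ) = ξ(4) J(ξ, ξ)`, and `J₃(ξ, ξ, ξ) = J(ξ, ξ) J(ξ², ξ) = -J(ξ, ξ)` because `ξ² = ξ⁻¹`.
-/

noncomputable local instance {F : Type*} [Field F] [Fintype F] : Fintype (MulChar F ℂ) :=
  .ofFinite _

lemma sum_comp_eq_sum_card_fiber {α β R : Type*} [Fintype α] [Fintype β] [DecidableEq β]
    [CommSemiring R] (g : α → β) (f : β → R) :
    ∑ x, f (g x) = ∑ u, (#{x | g x = u} : R) * f u := by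
  simp only [← sum_fiberwise' univ g f, sum_const, nsmul_eq_mul]

lemma MulChar.apply_neg_one_of_pow_eq_one {R R' : Type*} [CommRing R] [CommMonoidWithZero R']
    {χ : MulChar R R'} {n : ℕ} (hn : Odd n) (hχ : χ ^ n = 1) : χ (-1) = 1 := by
  rw [← hn.neg_one_pow, map_pow, ← MulChar.pow_apply' χ (Nat.ne_of_gt hn.pos), hχ,
    MulChar.one_apply isUnit_one.neg]

section

variable {F R : Type*} [Field F] [Fintype F] [CommRing R]

lemma sum_mulChar_mul_apply_add (χ ψ : MulChar F R) {a : F} (ha : a ≠ 0) :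
    ∑ u, χ u * ψ (u + a) = χ (-a) * ψ a * jacobiSum χ ψ := by
  rw [jacobiSum, mul_sum]
  refine (Fintype.sum_bijective _ (mulLeft_bijective₀ (-a) (neg_ne_zero.mpr ha)) _ _
    fun t => ?_).symm
  rw [show -a * t + a = a * (1 - t) by ring, map_mul, map_mul]
  ring

variable [IsDomain R]

lemma MulChar.sum_apply_one_sub_eq_zero {χ : MulChar F R} (hχ : χ ≠ 1) : ∑ v, χ (1 - v) = 0 :=
  ((Equiv.subLeft (1 : F)).sum_comp χ).trans (MulChar.sum_eq_zero_of_ne_one hχ)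

lemma sum_mulChar_mul_apply_sub {χ ψ : MulChar F R} (h : χ * ψ ≠ 1) (s : F) :
    ∑ x, χ x * ψ (s - x) = (χ * ψ) s * jacobiSum χ ψ := by
  rcases eq_or_ne s 0 with rfl | hs
  · have (x : F) : χ x * ψ (0 - x) = ψ (-1) * (χ * ψ) x := by
      rw [zero_sub, neg_eq_neg_one_mul x, MulChar.mul_apply, map_mul]; ring
    simp only [this, ← mul_sum, MulChar.sum_eq_zero_of_ne_one h, MulChar.map_zero, mul_zero,
      zero_mul]
  · rw [jacobiSum, mul_sum]
    refine (Fintype.sum_bijective _ (mulLeft_bijective₀ s hs) _ _ fun t => ?_).symm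
    rw [show s - s * t = s * (1 - t) by ring, map_mul, map_mul, MulChar.mul_apply]
    ring

lemma MulChar.eq_of_orderOf_eq_two {χ ψ : MulChar F R} (hχ : orderOf χ = 2)
    (hψ : orderOf ψ = 2) : χ = ψ := by
  obtain ⟨g, hg⟩ := IsCyclic.exists_generator (α := Fˣ)
  have apply_generator {φ : MulChar F R} (hφ : orderOf φ = 2) : φ g = -1 := by
    have hsq : φ g * φ g = 1 := by
      rw [← MulChar.mul_apply, ← sq, ← hφ, pow_orderOf_eq_one, MulChar.one_apply_coe]
    refine (mul_self_eq_one_iff.mp hsq).resolve_left fun h => ?_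
    have : φ = 1 := (MulChar.eq_iff hg φ 1).mpr (by rw [h, MulChar.one_apply_coe])
    simp [this] at hφ
  rw [MulChar.eq_iff hg, apply_generator hχ, apply_generator hψ]

lemma MulChar.exists_pow_eq_one_apply_ne_one {n : ℕ} {u : F} (hu : u ≠ 0)
    (hnp : ∀ c : F, c ^ n ≠ u) : ∃ ξ : MulChar F ℂ, ξ ^ n = 1 ∧ ξ u ≠ 1 := by
  let H : Subgroup Fˣ := (powMonoidHom n).range
  let X := (MulChar.subgroupOrderIsoSubgroupMulChar F ℂ H).ofDual
  have hX (ξ : MulChar F ℂ) (hξ : ξ ∈ X) : ξ ^ n = 1 := by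
    rw [MulChar.mem_subgroupOrderIsoSubgroupMulChar_iff] at hξ
    refine MulChar.eq_one_iff.mpr fun w => ?_
    rw [MulChar.pow_apply_coe, ← map_pow, ← Units.val_pow_eq_pow_val]
    exact hξ _ ⟨w, rfl⟩
  have hu' : Units.mk0 u hu ∉ (MulChar.subgroupOrderIsoSubgroupMulChar F ℂ).symm
      (OrderDual.toDual X) := by
    rw [OrderDual.toDual_ofDual, OrderIso.symm_apply_apply]
    rintro ⟨c, hc⟩
    exact hnp c (by simpa [Units.ext_iff] using hc)
  simp only [MulChar.mem_subgroupOrderIsoSubgroupMulChar_symm_iff, not_forall] at hu'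
  obtain ⟨ξ, hξX, hξu⟩ := hu'
  exact ⟨ξ, hX ξ hξX, hξu⟩

end

section

variable {F : Type*} [Field F] [Fintype F] [DecidableEq F]

lemma eq_quadraticChar_of_orderOf_eq_two (hF : ringChar F ≠ 2) {χ : MulChar F ℂ}
    (hχ : orderOf χ = 2) : χ = (quadraticChar F).ringHomComp (Int.castRingHom ℂ) := by
  refine MulChar.eq_of_orderOf_eq_two hχ (orderOf_eq_prime ?_ ?_)
  · rw [MulChar.ringHomComp_pow, (quadraticChar_isQuadratic F).sq_eq_one, MulChar.ringHomComp_one]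
  · obtain ⟨a, ha⟩ := quadraticChar_exists_neg_one hF
    have ha0 : a ≠ 0 := by rintro rfl; simp at ha
    intro h
    have := congrArg (· a) h
    norm_num [ha, MulChar.one_apply (isUnit_iff_ne_zero.mpr ha0)] at this

lemma card_sq_eq_eq_one_add (hF : ringChar F ≠ 2) {χ : MulChar F ℂ} (hχ : orderOf χ = 2)
    (v : F) : (#{w : F | w ^ 2 = v} : ℂ) = 1 + χ v := by
  rw [eq_quadraticChar_of_orderOf_eq_two hF hχ, MulChar.ringHomComp_apply]
  have := quadraticChar_card_sqrts hF v
  rw [Set.toFinset_ofPred] at this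
  rw [Int.coe_castRingHom, add_comm, ← Int.cast_one, ← Int.cast_add, ← this, Int.cast_natCast]

/- The substitution `x = (w + 1) / 2` turns `χ 4 * jacobiSum χ χ` into `∑ w, χ (1 - w ^ 2)`, and
counting square roots turns that into `jacobiSum lam χ`. -/
lemma jacobiSum_eq_apply_four_mul_jacobiSum_self (hF : ringChar F ≠ 2) {lam χ : MulChar F ℂ}
    (hlam : orderOf lam = 2) (hχ : χ ≠ 1) : jacobiSum χ lam = χ 4 * jacobiSum χ χ := by
  have h2 : (2 : F) ≠ 0 := Ring.two_ne_zero hF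
  calc jacobiSum χ lam
      = ∑ v, (1 + lam v) * χ (1 - v) := by
        rw [jacobiSum_comm, jacobiSum]
        simp only [add_mul, one_mul, sum_add_distrib, MulChar.sum_apply_one_sub_eq_zero hχ,
          zero_add]
    _ = ∑ w, χ (1 - w ^ 2) := by
        simp only [sum_comp_eq_sum_card_fiber (· ^ 2) (fun v => χ (1 - v)),
          card_sq_eq_eq_one_add hF hlam]
    _ = ∑ x, χ (4 * (x * (1 - x))) :=
        (Fintype.sum_equiv ((Equiv.mulLeft₀ 2 h2).trans (Equiv.subRight 1)) _ _ fun x => by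
          simp only [Equiv.trans_apply, Equiv.mulLeft₀_apply, Equiv.subRight_apply]
          ring_nf).symm
    _ = χ 4 * jacobiSum χ χ := by simp only [jacobiSum, mul_sum, map_mul]

lemma jacobiSum₃_eq_sum_sum (χ₁ χ₂ χ₃ : MulChar F ℂ) :
    jacobiSum₃ χ₁ χ₂ χ₃ = ∑ s, (∑ x, χ₁ x * χ₂ (s - x)) * χ₃ (1 - s) := by
  simp only [jacobiSum₃, sum_filter, Fintype.sum_prod_type, ← eq_sub_iff_add_eq', sum_ite_eq',
    mem_univ, if_true, sum_mul]
  conv_rhs => rw [sum_comm]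
  refine sum_congr rfl fun x _ => Fintype.sum_equiv (Equiv.addLeft x) _ _ fun y => ?_
  simp

lemma jacobiSum₃_eq_jacobiSum_mul_jacobiSum {χ₁ χ₂ : MulChar F ℂ} (h : χ₁ * χ₂ ≠ 1)
    (χ₃ : MulChar F ℂ) :
    jacobiSum₃ χ₁ χ₂ χ₃ = jacobiSum χ₁ χ₂ * jacobiSum (χ₁ * χ₂) χ₃ := by
  rw [jacobiSum₃_eq_sum_sum, jacobiSum.eq_1 (χ₁ * χ₂), mul_sum]
  exact sum_congr rfl fun s _ => by rw [sum_mulChar_mul_apply_sub h]; ring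

lemma jacobiSum₃_self_of_pow_three_eq_one {ξ : MulChar F ℂ} (hξ : ξ ≠ 1) (hξ3 : ξ ^ 3 = 1) :
    jacobiSum₃ ξ ξ ξ = -jacobiSum ξ ξ := by
  have hinv : (ξ * ξ)⁻¹ = ξ := inv_eq_of_mul_eq_one_right (by rw [mul_assoc, ← pow_three, hξ3])
  have hsq : ξ * ξ ≠ 1 := fun h => hξ (by rw [← hinv, h, inv_one])
  have hJ : jacobiSum (ξ * ξ) ξ = -1 := by
    nth_rw 3 [← hinv]
    rw [jacobiSum_nontrivial_inv hsq, MulChar.mul_apply, ← map_mul, neg_mul_neg, one_mul,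
      map_one]
  rw [jacobiSum₃_eq_jacobiSum_mul_jacobiSum hsq, hJ, mul_neg_one]

lemma card_pow_eq_pow_eq_card_pow_eq_one (n : ℕ) {c : F} (hc : c ≠ 0) :
    #{x : F | x ^ n = c ^ n} = #{x : F | x ^ n = 1} := by
  refine (card_equiv (Equiv.mulRight₀ c hc) fun x => ?_).symm
  simp [mul_pow, pow_ne_zero n hc]

open scoped Classical

lemma MulChar.card_pow_eq_one_eq {n : ℕ} (hn : n ≠ 0) :
    #{ξ : MulChar F ℂ | ξ ^ n = 1} = #{x : F | x ^ n = 1} := by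
  obtain ⟨e⟩ := MulChar.mulEquiv_units F ℂ
  calc #{ξ : MulChar F ℂ | ξ ^ n = 1}
      = #{w : Fˣ | w ^ n = 1} := card_equiv e.toEquiv fun ξ => by simp [← map_pow]
    _ = #{x : F | x ^ n = 1} := by
      refine card_bij (fun w _ => (w : F)) (fun w hw => ?_) (fun _ _ _ _ h => Units.ext h)
        fun x hx => ?_
      · simpa [← Units.val_pow_eq_pow_val] using hw
      · have hx0 : x ≠ 0 := by rintro rfl; simp [hn] at hx
        exact ⟨Units.mk0 x hx0, by simpa [Units.ext_iff] using hx, rfl⟩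

lemma sum_mulChar_pow_eq_one_apply {n : ℕ} (hn : n ≠ 0) {u : F} (hu : u ≠ 0) :
    ∑ ξ : MulChar F ℂ with ξ ^ n = 1, ξ u = #{x : F | x ^ n = u} := by
  by_cases hpow : ∃ c : F, c ^ n = u
  · obtain ⟨c, rfl⟩ := hpow
    have hc : c ≠ 0 := fun h => hu (by simp [h, hn])
    have hξ (ξ : MulChar F ℂ) (hξ : ξ ∈ ({ξ | ξ ^ n = 1} : Finset _)) : ξ (c ^ n) = 1 := by
      rw [map_pow, ← MulChar.pow_apply' ξ hn, (mem_filter.mp hξ).2,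
        MulChar.one_apply (isUnit_iff_ne_zero.mpr hc)]
    rw [sum_congr rfl hξ, sum_const, nsmul_one, card_pow_eq_pow_eq_card_pow_eq_one n hc,
      MulChar.card_pow_eq_one_eq hn]
  · push Not at hpow
    obtain ⟨ξ₀, hξ₀, hξ₀u⟩ := MulChar.exists_pow_eq_one_apply_ne_one hu hpow
    rw [filter_false_of_mem fun x _ => hpow x, card_empty, Nat.cast_zero]
    refine eq_zero_of_mul_eq_self_left hξ₀u ?_
    simp only [mul_sum, ← MulChar.mul_apply]
    refine sum_nbij' (ξ₀ * ·) (ξ₀⁻¹ * ·) (fun ξ hξ => ?_) (fun ξ hξ => ?_) (fun ξ _ => ?_)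
      (fun ξ _ => ?_) fun ξ _ => rfl
    all_goals simp_all [mul_pow]

/- Mathlib's trivial character vanishes at `0`, so the root `0` of `x ^ n = 0` is not seen by the
character sum. -/
lemma card_pow_eq_eq_sum_mulChar {n : ℕ} (hn : n ≠ 0) (u : F) :
    (#{x : F | x ^ n = u} : ℂ) =
      (if u = 0 then 1 else 0) + ∑ ξ : MulChar F ℂ with ξ ^ n = 1, ξ u := by
  rcases eq_or_ne u 0 with rfl | hu
  · simp [pow_eq_zero_iff hn, filter_eq', MulChar.map_zero]
  · rw [if_neg hu, zero_add, sum_mulChar_pow_eq_one_apply hn hu]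

lemma sum_mulChar_pow_add_eq {n : ℕ} (hn : n ≠ 0) (ψ : MulChar F ℂ) {a : F} (ha : a ≠ 0) :
    ∑ x, ψ (x ^ n + a) =
      ψ a + ∑ ξ : MulChar F ℂ with ξ ^ n = 1, ξ (-a) * ψ a * jacobiSum ξ ψ := by
  rw [sum_comp_eq_sum_card_fiber (· ^ n) (fun u => ψ (u + a))]
  simp only [card_pow_eq_eq_sum_mulChar hn, add_mul, ite_mul, one_mul, zero_mul, sum_add_distrib,
    sum_ite_eq', mem_univ, if_true, zero_add, sum_mul, ← sum_mulChar_mul_apply_add _ _ ha]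
  rw [sum_comm]

end

/-- Let `F` be a finite field of odd characteristic with quadratic character `λ`, and let
`a ∈ F^×`.  Then `∑_{x ∈ F} λ(x³ + a) = −λ(a)·∑_ξ ξ(4a)·j_F(ξ, ξ, ξ)`, where the sum on the
right ranges over the nontrivial multiplicative characters `ξ` of `F` with `ξ³ = 𝟙`. -/
theorem charSum_cubic_plus_const (F : Type*) [Field F] [Fintype F] [DecidableEq F]
    (hodd : ringChar F ≠ 2)
    (lam : MulChar F ℂ) (hlam : orderOf lam = 2)
    (a : F) (ha : a ≠ 0) :
    ∑ x : F, lam (x ^ 3 + a) =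
      -lam a * ∑ᶠ ξ ∈ {ξ : MulChar F ℂ | ξ ≠ 1 ∧ ξ ^ 3 = 1},
        ξ (4 * a) * jacobiSum₃ ξ ξ ξ := by
  classical
  have hlam1 : lam ≠ 1 := by rintro rfl; simp at hlam
  have hone : (1 : MulChar F ℂ) ∈ ({ξ | ξ ^ 3 = 1} : Finset _) := by simp
  have herase : ({ξ | ξ ^ 3 = 1} : Finset (MulChar F ℂ)).erase 1 =
      ({ξ | ξ ≠ 1 ∧ ξ ^ 3 = 1} : Finset _) := by
    ext; simp
  rw [← coe_filter_univ, finsum_mem_coe_finset, sum_mulChar_pow_add_eq three_ne_zero lam ha,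
    ← add_sum_erase _ _ hone, herase, jacobiSum_one_nontrivial hlam1,
    MulChar.one_apply (isUnit_iff_ne_zero.mpr (neg_ne_zero.mpr ha)), one_mul, mul_neg_one,
    add_neg_cancel_left, mul_sum]
  refine sum_congr rfl fun ξ hξ => ?_
  obtain ⟨hξ1, hξ3⟩ := (mem_filter.mp hξ).2
  rw [jacobiSum_eq_apply_four_mul_jacobiSum_self hodd hlam hξ1,
    jacobiSum₃_self_of_pow_three_eq_one hξ1 hξ3, neg_eq_neg_one_mul a, map_mul,
    MulChar.apply_neg_one_of_pow_eq_one (by decide : Odd 3) hξ3, map_mul]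
  ring
end

section
/- Let F be a finite field of odd characteristic with quadratic character λ, and let d ≥ 1 be an integer coprime to |F|. Then Σ_{τ∈F} Σ_{x∈F} λ(x³ + x² − 8·τ^d·x + 16·τ^{2d}) = Σ_χ χ(−1)·j_F(χ, χ, χ), where the sum on the right ranges over the nontrivial multiplicative characters χ of F satisfying χ^d = 𝟙. -/
open Finset

section Aux

variable {F : Type*} [Field F] [Fintype F] [DecidableEq F]

private lemma card_chars_pow_eq_one [Fintype (MulChar F ℂ)] [DecidableEq (MulChar F ℂ)]
    (e : ℕ) :
    (univ.filter fun χ : MulChar F ℂ => χ ^ e = 1).card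
      = (univ.filter fun v : Fˣ => v ^ e = 1).card := by
  haveI : NeZero ((Monoid.exponent Fˣ : ℕ) : ℂ) :=
    ⟨Nat.cast_ne_zero.mpr Monoid.exponent_ne_zero_of_finite⟩
  obtain ⟨φ⟩ := MulChar.mulEquiv_units F ℂ
  refine Finset.card_bij (fun χ _ => φ χ) ?_ ?_ ?_
  · intro χ hχ
    simp only [mem_filter, mem_univ, true_and] at hχ ⊢
    rw [← map_pow, hχ, map_one]
  · intro χ₁ _ χ₂ _ h
    exact φ.injective h
  · intro v hv
    refine ⟨φ.symm v, ?_, φ.apply_symm_apply v⟩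
    simp only [mem_filter, mem_univ, true_and] at hv ⊢
    apply φ.injective
    rw [map_pow, φ.apply_symm_apply, hv, map_one]

private lemma orth_aux [Fintype (MulChar F ℂ)] [DecidableEq (MulChar F ℂ)]
    {e : ℕ} (he : e ≠ 0) {t : F} (ht : t ≠ 0) :
    ∑ χ ∈ univ.filter (fun χ : MulChar F ℂ => χ ^ e = 1), χ t
      = ((univ.filter fun τ : F => τ ^ e = t).card : ℂ) := by
  lift t to Fˣ using ht.isUnit
  have hcard : (univ.filter fun v : Fˣ => v ^ e = t).card
      = (univ.filter fun τ : F => τ ^ e = (t : F)).card := by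
    refine Finset.card_bij (fun v _ => (v : F)) ?_ ?_ ?_
    · intro v hv
      simp only [mem_filter, mem_univ, true_and] at hv ⊢
      rw [← Units.val_pow_eq_pow_val, hv]
    · intro a _ b _ h
      exact Units.ext h
    · intro τ hτ
      simp only [mem_filter, mem_univ, true_and] at hτ
      have hτ0 : τ ≠ 0 := by
        rintro rfl
        rw [zero_pow he] at hτ
        exact t.ne_zero hτ.symm
      refine ⟨Units.mk0 τ hτ0, ?_, rfl⟩
      simp only [mem_filter, mem_univ, true_and]
      ext
      rw [Units.val_pow_eq_pow_val, Units.val_mk0, hτ]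
  by_cases hex : ∃ w : Fˣ, w ^ e = t
  · obtain ⟨w, hw⟩ := hex
    have h1 : ∀ χ ∈ univ.filter (fun χ : MulChar F ℂ => χ ^ e = 1), χ (t : F) = 1 := by
      intro χ hχ
      rw [mem_filter] at hχ
      calc χ (t : F) = χ ((w : F) ^ e) := by rw [← Units.val_pow_eq_pow_val, hw]
      _ = (χ (w : F)) ^ e := map_pow χ _ _
      _ = (χ ^ e) (w : F) := (MulChar.pow_apply' χ he _).symm
      _ = 1 := by rw [hχ.2, MulChar.one_apply_coe]
    rw [Finset.sum_congr rfl h1, Finset.sum_const, nsmul_eq_mul, mul_one, ← hcard]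
    congr 1
    rw [card_chars_pow_eq_one]
    refine Finset.card_bij (fun v _ => v * w) ?_ ?_ ?_
    · intro v hv
      simp only [mem_filter, mem_univ, true_and] at hv ⊢
      rw [mul_pow, hv, one_mul, hw]
    · intro a _ b _ h
      exact mul_right_cancel h
    · intro v hv
      simp only [mem_filter, mem_univ, true_and] at hv
      refine ⟨v * w⁻¹, ?_, by simp⟩
      simp only [mem_filter, mem_univ, true_and, mul_pow, inv_pow, hv, hw,
        mul_inv_cancel]
  · have h0 : (univ.filter fun τ : F => τ ^ e = (t : F)) = ∅ := by
      rw [Finset.filter_eq_empty_iff]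
      intro τ _ hτ
      have hτ0 : τ ≠ 0 := by
        rintro rfl
        rw [zero_pow he] at hτ
        exact t.ne_zero hτ.symm
      exact hex ⟨Units.mk0 τ hτ0, Units.ext (by
        rw [Units.val_pow_eq_pow_val, Units.val_mk0, hτ])⟩
    rw [h0]
    simp only [card_empty, Nat.cast_zero]
    -- construct a character χ₀ with χ₀ ^ e = 1 and χ₀ t ≠ 1
    obtain ⟨g₀, hg₀⟩ := IsCyclic.exists_generator (α := Fˣ)
    set n := Fintype.card Fˣ with hn
    set g := Nat.gcd e n with hgdef
    have hn0 : n ≠ 0 := Fintype.card_ne_zero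
    have hg0 : g ≠ 0 := fun h => hn0 (Nat.gcd_eq_zero_iff.mp h).2
    have hgn : g ∣ n := Nat.gcd_dvd_right e n
    have hge : g ∣ e := Nat.gcd_dvd_left e n
    have hζ : IsPrimitiveRoot (Complex.exp (2 * Real.pi * Complex.I / g)) g :=
      Complex.isPrimitiveRoot_exp g hg0
    set ζ : ℂ := Complex.exp (2 * Real.pi * Complex.I / g) with hζdef
    have hζu : IsUnit ζ := hζ.isUnit hg0
    have hζn : hζu.unit ∈ rootsOfUnity n ℂ := by
      rw [mem_rootsOfUnity]
      ext
      rw [Units.val_pow_eq_pow_val, IsUnit.unit_spec, Units.val_one]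
      obtain ⟨m, hm⟩ := hgn
      rw [hm, pow_mul, hζ.pow_eq_one, one_pow]
    set χ₀ : MulChar F ℂ := MulChar.ofRootOfUnity hζn hg₀ with hχ₀def
    have hχ₀g : χ₀ (g₀ : F) = ζ := by
      rw [hχ₀def, MulChar.ofRootOfUnity_spec, IsUnit.unit_spec]
    have hχ₀e : χ₀ ^ e = 1 := by
      rw [MulChar.eq_iff hg₀, MulChar.pow_apply_coe, hχ₀g, MulChar.one_apply_coe]
      obtain ⟨m, hm⟩ := hge
      rw [hm, pow_mul, hζ.pow_eq_one, one_pow]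
    have hmem : χ₀ ∈ univ.filter (fun χ : MulChar F ℂ => χ ^ e = 1) :=
      mem_filter.mpr ⟨mem_univ _, hχ₀e⟩
    have hχ₀t : χ₀ (t : F) ≠ 1 := by
      intro hone
      obtain ⟨k, hk⟩ := ((isOfFinOrder_of_finite g₀).mem_powers_iff_mem_zpowers.mpr (hg₀ t))
      have hval : χ₀ (t : F) = ζ ^ k := by
        rw [← hk, Units.val_pow_eq_pow_val, map_pow, hχ₀g]
      rw [hval] at hone
      obtain ⟨m, hm⟩ := hζ.dvd_of_pow_eq_one k hone
      apply hex
      refine ⟨g₀ ^ (Nat.gcdA e n * m), ?_⟩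
      have hcard1 : g₀ ^ (n : ℤ) = 1 := by
        rw [zpow_natCast]
        exact pow_card_eq_one
      have key : (e : ℤ) * Nat.gcdA e n * m = (g : ℤ) * m - (n : ℤ) * (Nat.gcdB e n * m) := by
        have hb := Nat.gcd_eq_gcd_ab e n
        rw [hgdef]
        push_cast [hb]
        ring
      calc (g₀ ^ (Nat.gcdA e n * m)) ^ e
          = g₀ ^ ((e : ℤ) * Nat.gcdA e n * m) := by
            rw [← zpow_natCast (g₀ ^ (Nat.gcdA e n * m)) e, ← zpow_mul]
            ring_nf
      _ = g₀ ^ ((g : ℤ) * m - (n : ℤ) * (Nat.gcdB e n * m)) := by rw [key]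
      _ = g₀ ^ ((g : ℤ) * m) * (g₀ ^ ((n : ℤ) * (Nat.gcdB e n * m)))⁻¹ := by
            rw [zpow_sub]
      _ = g₀ ^ ((g : ℤ) * m) := by
            rw [zpow_mul g₀ (n : ℤ), hcard1, one_zpow, inv_one, mul_one]
      _ = g₀ ^ (k : ℤ) := by
            congr 1
            push_cast [hm]
            ring
      _ = t := by
            rw [zpow_natCast]
            exact hk
    have hmul : χ₀ (t : F) * ∑ χ ∈ univ.filter (fun χ : MulChar F ℂ => χ ^ e = 1), χ (t : F)
        = ∑ χ ∈ univ.filter (fun χ : MulChar F ℂ => χ ^ e = 1), χ (t : F) := by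
      rw [Finset.mul_sum]
      refine Finset.sum_nbij' (i := fun χ => χ₀ * χ) (j := fun χ => χ₀⁻¹ * χ) ?_ ?_ ?_ ?_ ?_
      · intro χ hχ
        simp only [mem_filter, mem_univ, true_and] at hχ ⊢
        rw [mul_pow, hχ₀e, hχ, one_mul]
      · intro χ hχ
        simp only [mem_filter, mem_univ, true_and] at hχ ⊢
        rw [mul_pow, inv_pow, hχ₀e, hχ, inv_one, one_mul]
      · intro χ _
        exact inv_mul_cancel_left χ₀ χ
      · intro χ _
        exact mul_inv_cancel_left χ₀ χ
      · intro χ _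
        exact (MulChar.mul_apply χ₀ χ _).symm
    exact eq_zero_of_mul_eq_self_left hχ₀t hmul


private lemma lam_ne_one {lam : MulChar F ℂ} (hlam : orderOf lam = 2) : lam ≠ 1 := by
  intro h
  rw [h, orderOf_one] at hlam
  norm_num at hlam

private lemma lam_mul_self {lam : MulChar F ℂ} (hlam : orderOf lam = 2) {w : F} (hw : w ≠ 0) :
    lam (w * w) = 1 := by
  have h1 : lam (w * w) = (lam ^ 2) w := by
    rw [MulChar.pow_apply' lam two_ne_zero, sq, map_mul]
  rw [h1, ← hlam, pow_orderOf_eq_one lam,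
    MulChar.one_apply (isUnit_iff_ne_zero.mpr hw)]

private lemma quadCard [Fintype (MulChar F ℂ)] [DecidableEq (MulChar F ℂ)]
    (hodd : ringChar F ≠ 2) (lam : MulChar F ℂ) (hlam : orderOf lam = 2) (v : F) :
    ((univ.filter fun y : F => y ^ 2 = v).card : ℂ) = 1 + lam v := by
  have hlam1 : lam ≠ 1 := lam_ne_one hlam
  by_cases hv : v = 0
  · subst hv
    have hfil : (univ.filter fun y : F => y ^ 2 = 0) = {0} := by
      ext y
      simp [pow_eq_zero_iff]
    rw [hfil, MulChar.map_zero lam]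
    simp
  · rw [← orth_aux two_ne_zero hv]
    have hone_ne : (1 : MulChar F ℂ) ≠ lam := fun h => hlam1 h.symm
    have hset : (univ.filter fun χ : MulChar F ℂ => χ ^ 2 = 1) = {1, lam} := by
      have hsub : ({1, lam} : Finset (MulChar F ℂ)) ⊆ univ.filter (fun χ => χ ^ 2 = 1) := by
        intro χ hχ
        simp only [Finset.mem_insert, Finset.mem_singleton] at hχ
        simp only [mem_filter, mem_univ, true_and]
        rcases hχ with h | h
        · rw [h]; exact one_pow 2
        · rw [h, ← hlam]; exact pow_orderOf_eq_one lam
      refine (Finset.eq_of_subset_of_card_le hsub ?_).symm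
      rw [card_chars_pow_eq_one]
      have hne : (1 : Fˣ) ≠ -1 := by
        intro h
        apply Ring.neg_one_ne_one_of_char_ne_two hodd
        have := congrArg Units.val h
        simpa using this.symm
      have h2 : (univ.filter fun w : Fˣ => w ^ 2 = 1) = ({1, -1} : Finset Fˣ) := by
        ext w
        simp only [mem_filter, mem_univ, true_and, Finset.mem_insert, Finset.mem_singleton]
        constructor
        · intro h
          have hval : (w : F) * w = 1 := by
            have := congrArg Units.val h
            rw [Units.val_pow_eq_pow_val, sq] at this
            simpa using this
          rcases mul_self_eq_one_iff.mp hval with h1 | h1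
          · left; exact Units.ext h1
          · right; apply Units.ext; rw [h1]; simp
        · rintro (rfl | rfl)
          · simp
          · rw [sq, neg_one_mul, neg_neg]
      rw [h2, Finset.card_insert_of_notMem (by simpa using hne),
        Finset.card_singleton, Finset.card_insert_of_notMem (by simpa using hone_ne),
        Finset.card_singleton]
    rw [hset, Finset.sum_pair hone_ne, MulChar.one_apply (isUnit_iff_ne_zero.mpr hv)]

private lemma quadSum [Fintype (MulChar F ℂ)] [DecidableEq (MulChar F ℂ)]
    (hodd : ringChar F ≠ 2) (lam : MulChar F ℂ) (hlam : orderOf lam = 2) (c : F) :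
    ∑ u : F, lam (u ^ 2 + c) = if c = 0 then (Fintype.card F : ℂ) - 1 else -1 := by
  have hlam1 : lam ≠ 1 := lam_ne_one hlam
  rw [← Finset.sum_fiberwise univ (fun u : F => u ^ 2) (fun u => lam (u ^ 2 + c))]
  have inner : ∀ v : F, ∑ u ∈ univ.filter (fun u : F => u ^ 2 = v), lam (u ^ 2 + c)
      = (1 + lam v) * lam (v + c) := by
    intro v
    rw [Finset.sum_congr rfl (fun u hu => by rw [(mem_filter.mp hu).2]),
      Finset.sum_const, nsmul_eq_mul, quadCard hodd lam hlam v]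
  rw [Finset.sum_congr rfl (fun v _ => inner v)]
  have expand : ∑ v : F, (1 + lam v) * lam (v + c)
      = (∑ v : F, lam (v + c)) + ∑ v : F, lam v * lam (v + c) := by
    rw [← Finset.sum_add_distrib]
    exact Finset.sum_congr rfl (fun v _ => by ring)
  have hshift : ∑ v : F, lam (v + c) = 0 := by
    rw [Fintype.sum_bijective (fun v : F => v + c) (Equiv.addRight c).bijective
      (fun v => lam (v + c)) (fun s => lam s) (fun v => rfl)]
    exact MulChar.sum_eq_zero_of_ne_one hlam1
  rw [expand, hshift, zero_add]
  by_cases hc : c = 0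
  · subst hc
    rw [if_pos rfl]
    have hpt : ∀ v : F, lam v * lam (v + 0) = 1 - (if v = 0 then 1 else 0) := by
      intro v
      by_cases hv : v = 0
      · simp [hv, MulChar.map_zero lam]
      · rw [add_zero, ← map_mul, lam_mul_self hlam hv, if_neg hv, sub_zero]
    rw [Finset.sum_congr rfl (fun v _ => hpt v), Finset.sum_sub_distrib,
      Finset.sum_const, Finset.sum_ite_eq' univ (0 : F) (fun _ => (1 : ℂ))]
    simp [Finset.card_univ]
  · rw [if_neg hc]
    have hpt : ∀ v : F, lam v * lam (v + c) = lam (v * (v + c)) :=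
      fun v => (map_mul lam _ _).symm
    rw [Finset.sum_congr rfl (fun v _ => hpt v),
      ← Finset.sum_erase_add univ _ (mem_univ (0 : F))]
    have h00 : lam (0 * (0 + c)) = 0 := by
      rw [zero_mul, MulChar.map_zero]
    rw [h00, add_zero]
    have hpt2 : ∀ v ∈ univ.erase (0 : F), lam (v * (v + c)) = lam (1 + c * v⁻¹) := by
      intro v hv
      have hv0 : v ≠ 0 := (Finset.mem_erase.mp hv).1
      have : v * (v + c) = (v * v) * (1 + c * v⁻¹) := by
        field_simp
      rw [this, map_mul, lam_mul_self hlam hv0, one_mul]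
    rw [Finset.sum_congr rfl hpt2]
    have hbij : ∑ v ∈ univ.erase (0 : F), lam (1 + c * v⁻¹)
        = ∑ w ∈ univ.erase (1 : F), lam w := by
      refine Finset.sum_nbij' (i := fun v => 1 + c * v⁻¹) (j := fun w => c * (w - 1)⁻¹)
        ?_ ?_ ?_ ?_ ?_
      · intro v hv
        have hv0 : v ≠ 0 := (Finset.mem_erase.mp hv).1
        simp only [Finset.mem_erase, Finset.mem_univ, and_true]
        intro h
        have : c * v⁻¹ = 0 := by linear_combination h
        rcases mul_eq_zero.mp this with h' | h'
        · exact hc h'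
        · exact hv0 (inv_eq_zero.mp h')
      · intro w hw
        have hw1 : w ≠ 1 := (Finset.mem_erase.mp hw).1
        simp only [Finset.mem_erase, Finset.mem_univ, and_true]
        intro h
        rcases mul_eq_zero.mp h with h' | h'
        · exact hc h'
        · exact hw1 (by
            have := inv_eq_zero.mp h'
            linear_combination this)
      · intro v hv
        have hv0 : v ≠ 0 := (Finset.mem_erase.mp hv).1
        field_simp
        simp [hc]
      · intro w hw
        have hw1 : w ≠ 1 := (Finset.mem_erase.mp hw).1
        have : w - 1 ≠ 0 := sub_ne_zero.mpr hw1
        field_simp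
        ring
      · intro v _
        rfl
    rw [hbij]
    have : ∑ w ∈ univ.erase (1 : F), lam w = (∑ w : F, lam w) - lam 1 := by
      rw [← Finset.sum_erase_add univ _ (mem_univ (1 : F))]
      ring
    rw [this, MulChar.sum_eq_zero_of_ne_one hlam1, map_one, zero_sub]


private lemma hessian_four_ne_zero (hodd : ringChar F ≠ 2) : (4 : F) ≠ 0 := by
  have h2 : (2 : F) ≠ 0 := Ring.two_ne_zero hodd
  have h4 : (4 : F) = 2 * 2 := by norm_num
  rw [h4]
  exact mul_ne_zero h2 h2

private lemma factD [Fintype (MulChar F ℂ)] [DecidableEq (MulChar F ℂ)]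
    (hodd : ringChar F ≠ 2) (lam : MulChar F ℂ) (hlam : orderOf lam = 2) :
    ∑ t : F, ∑ x : F, lam (x ^ 3 + x ^ 2 - 8 * t * x + 16 * t ^ 2) = 0 := by
  rw [Finset.sum_comm]
  have h4 : (4 : F) ≠ 0 := hessian_four_ne_zero hodd
  have hx : ∀ x : F, ∑ t : F, lam (x ^ 3 + x ^ 2 - 8 * t * x + 16 * t ^ 2)
      = ∑ u : F, lam (u ^ 2 + x ^ 3) := by
    intro x
    have hbij : Function.Bijective (fun t : F => 4 * t - x) := by
      refine Finite.injective_iff_bijective.mp fun a b hab => ?_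
      have : (4 : F) * a = 4 * b := by linear_combination hab
      exact mul_left_cancel₀ h4 this
    refine Fintype.sum_bijective _ hbij _ _ (fun t => ?_)
    congr 1
    ring
  rw [Finset.sum_congr rfl (fun x _ => hx x),
    Finset.sum_congr rfl (fun x _ => quadSum hodd lam hlam (x ^ 3))]
  have hpt : ∀ x : F, (if x ^ 3 = 0 then (Fintype.card F : ℂ) - 1 else -1)
      = -1 + (if x = 0 then (Fintype.card F : ℂ) else 0) := by
    intro x
    by_cases hx0 : x = 0
    · simp [hx0]
      ring
    · simp [hx0, pow_eq_zero_iff]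
  rw [Finset.sum_congr rfl (fun x _ => hpt x), Finset.sum_add_distrib,
    Finset.sum_const, Finset.sum_ite_eq' univ (0 : F) (fun _ => (Fintype.card F : ℂ))]
  simp [Finset.card_univ]

private lemma factE [Fintype (MulChar F ℂ)] [DecidableEq (MulChar F ℂ)]
    (hodd : ringChar F ≠ 2) (lam : MulChar F ℂ) (hlam : orderOf lam = 2)
    {χ : MulChar F ℂ} (hχ : χ ≠ 1) :
    ∑ t : F, χ t * ∑ x : F, lam (x ^ 3 + x ^ 2 - 8 * t * x + 16 * t ^ 2)
      = χ (-1) * ∑ v ∈ Finset.univ.filter (fun v : F × F × F => v.1 + v.2.1 + v.2.2 = 1),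
          χ v.1 * χ v.2.1 * χ v.2.2 := by
  have h2 : (2 : F) ≠ 0 := Ring.two_ne_zero hodd
  have h4 : (4 : F) ≠ 0 := hessian_four_ne_zero hodd
  -- Step 1: substitute u = 4t - x
  have step1 : ∑ t : F, χ t * ∑ x : F, lam (x ^ 3 + x ^ 2 - 8 * t * x + 16 * t ^ 2)
      = χ 4⁻¹ * ∑ x : F, ∑ u : F, χ (u + x) * lam (u ^ 2 + x ^ 3) := by
    have e1 : ∑ t : F, χ t * ∑ x : F, lam (x ^ 3 + x ^ 2 - 8 * t * x + 16 * t ^ 2)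
        = ∑ x : F, ∑ t : F, χ t * lam (x ^ 3 + x ^ 2 - 8 * t * x + 16 * t ^ 2) := by
      simp_rw [Finset.mul_sum]
      exact Finset.sum_comm
    rw [e1, Finset.mul_sum]
    refine Finset.sum_congr rfl fun x _ => ?_
    have hbij : Function.Bijective (fun t : F => 4 * t - x) := by
      refine Finite.injective_iff_bijective.mp fun a b hab => ?_
      have : (4 : F) * a = 4 * b := by linear_combination hab
      exact mul_left_cancel₀ h4 this
    rw [Finset.mul_sum]
    refine Fintype.sum_bijective (fun t : F => 4 * t - x) hbij _ _ (fun t => ?_)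
    show χ t * lam (x ^ 3 + x ^ 2 - 8 * t * x + 16 * t ^ 2)
        = χ 4⁻¹ * (χ (4 * t - x + x) * lam ((4 * t - x) ^ 2 + x ^ 3))
    rw [show (4 * t - x + x) = 4 * t by ring,
      show ((4 : F) * t - x) ^ 2 + x ^ 3 = x ^ 3 + x ^ 2 - 8 * t * x + 16 * t ^ 2 by ring,
      ← mul_assoc, ← map_mul, show (4 : F)⁻¹ * (4 * t) = t by field_simp]
  rw [step1]
  -- Step 2: lam value as point count minus 1
  have step2 : ∑ x : F, ∑ u : F, χ (u + x) * lam (u ^ 2 + x ^ 3)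
      = ∑ x : F, ∑ u : F,
          χ (u + x) * ((univ.filter fun y : F => y ^ 2 = u ^ 2 + x ^ 3).card : ℂ)
        - ∑ x : F, ∑ u : F, χ (u + x) := by
    rw [← Finset.sum_sub_distrib]
    refine Finset.sum_congr rfl fun x _ => ?_
    rw [← Finset.sum_sub_distrib]
    refine Finset.sum_congr rfl fun u _ => ?_
    rw [quadCard hodd lam hlam]
    ring
  have hsecond : ∑ x : F, ∑ u : F, χ (u + x) = 0 := by
    refine Finset.sum_eq_zero fun x _ => ?_
    rw [Fintype.sum_bijective (fun u : F => u + x) (Equiv.addRight x).bijective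
      (fun u => χ (u + x)) (fun s => χ s) (fun u => rfl)]
    exact MulChar.sum_eq_zero_of_ne_one hχ
  rw [step2, hsecond, sub_zero]
  -- Step 3: count as a sum over pairs, then change variables
  have step3 : ∀ x : F, ∑ u : F,
      χ (u + x) * ((univ.filter fun y : F => y ^ 2 = u ^ 2 + x ^ 3).card : ℂ)
      = ∑ p ∈ (univ : Finset (F × F)).filter (fun p => p.2 ^ 2 = p.1 ^ 2 + x ^ 3),
          χ (p.1 + x) := by
    intro x
    rw [Finset.sum_filter, Fintype.sum_prod_type]
    refine Finset.sum_congr rfl fun u _ => ?_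
    show χ (u + x) * _ = ∑ y : F, if y ^ 2 = u ^ 2 + x ^ 3 then χ (u + x) else 0
    rw [← Finset.sum_filter, Finset.sum_const, nsmul_eq_mul, mul_comm]
  have step4 : ∀ x : F,
      (∑ p ∈ (univ : Finset (F × F)).filter (fun p => p.2 ^ 2 = p.1 ^ 2 + x ^ 3), χ (p.1 + x))
      = χ 2⁻¹ * ∑ q ∈ (univ : Finset (F × F)).filter (fun q => q.1 * q.2 = x ^ 3),
          χ (q.2 - q.1 + 2 * x) := by
    intro x
    have hcv : ∑ q ∈ (univ : Finset (F × F)).filter (fun q => q.1 * q.2 = x ^ 3),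
        χ ((q.2 - q.1) * 2⁻¹ + x)
        = ∑ p ∈ (univ : Finset (F × F)).filter (fun p => p.2 ^ 2 = p.1 ^ 2 + x ^ 3),
          χ (p.1 + x) := by
      refine Finset.sum_nbij' (i := fun q => ((q.2 - q.1) * 2⁻¹, (q.2 + q.1) * 2⁻¹))
        (j := fun p => (p.2 - p.1, p.2 + p.1)) ?_ ?_ ?_ ?_ ?_
      · intro q hq
        simp only [mem_filter, mem_univ, true_and] at hq ⊢
        field_simp
        linear_combination 4 * hq
      · intro p hp
        simp only [mem_filter, mem_univ, true_and] at hp ⊢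
        linear_combination hp
      · intro q _
        have ha : (q.2 + q.1) * 2⁻¹ - (q.2 - q.1) * 2⁻¹ = q.1 := by field_simp; ring
        exact Prod.ext ha (by field_simp; ring)
      · intro p _
        exact Prod.ext (by field_simp; ring) (by field_simp; ring)
      · intro q _
        rfl
    rw [← hcv, Finset.mul_sum]
    refine Finset.sum_congr rfl fun q _ => ?_
    rw [← map_mul]
    congr 1
    field_simp
  rw [Finset.sum_congr rfl (fun x _ => (step3 x).trans (step4 x)), ← Finset.mul_sum]
  -- Step 5: evaluate K = ∑_x ∑_{ab=x³} χ(b-a+2x)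
  set K := ∑ x : F, ∑ q ∈ (univ : Finset (F × F)).filter (fun q => q.1 * q.2 = x ^ 3),
      χ (q.2 - q.1 + 2 * x) with hKdef
  have hK0 : ∑ q ∈ (univ : Finset (F × F)).filter
      (fun q => q.1 * q.2 = (0 : F) ^ 3), χ (q.2 - q.1 + 2 * 0) = 0 := by
    rw [Finset.sum_filter, Fintype.sum_prod_type]
    have hrow : ∀ a : F, (∑ b : F, if a * b = (0 : F) ^ 3 then χ (b - a + 2 * 0) else 0)
        = χ (-a) := by
      intro a
      by_cases ha : a = 0
      · subst ha
        have hrw : (∑ b : F, if (0 : F) * b = (0 : F) ^ 3 then χ (b - 0 + 2 * 0) else 0)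
            = ∑ b : F, χ b := by
          refine Finset.sum_congr rfl fun b _ => ?_
          rw [if_pos (by ring), sub_zero, mul_zero, add_zero]
        rw [hrw, MulChar.sum_eq_zero_of_ne_one hχ, neg_zero, MulChar.map_zero]
      · have hcond : ∀ b : F, (a * b = (0 : F) ^ 3) = (b = 0) := by
          intro b
          simp [ha, pow_succ, mul_eq_zero]
        simp only [hcond]
        rw [Finset.sum_ite_eq' univ (0 : F) (fun b => χ (b - a + 2 * 0)),
          if_pos (mem_univ _)]
        norm_num
    rw [Finset.sum_congr rfl (fun a _ => hrow a)]
    rw [Fintype.sum_bijective (fun a : F => -a) (Equiv.neg F).bijective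
      (fun a => χ (-a)) (fun s => χ s) (fun a => by simp)]
    exact MulChar.sum_eq_zero_of_ne_one hχ
  have hKx : ∀ x : F, x ≠ 0 →
      (∑ q ∈ (univ : Finset (F × F)).filter (fun q => q.1 * q.2 = x ^ 3),
        χ (q.2 - q.1 + 2 * x))
      = ∑ q ∈ (univ : Finset (F × F)).filter (fun q => q.1 * q.2 = x),
          χ (q.1 * q.2) * χ (q.1 - q.2 + 2) := by
    intro x hx
    refine (Finset.sum_nbij' (i := fun q => (-x * q.1, -x * q.2))
      (j := fun q => (-x⁻¹ * q.1, -x⁻¹ * q.2)) ?_ ?_ ?_ ?_ ?_).symm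
    · intro q hq
      simp only [mem_filter, mem_univ, true_and] at hq ⊢
      linear_combination x ^ 2 * hq
    · intro q hq
      simp only [mem_filter, mem_univ, true_and] at hq ⊢
      field_simp
      linear_combination hq
    · intro q _
      exact Prod.ext (by field_simp) (by field_simp)
    · intro q _
      exact Prod.ext (by field_simp) (by field_simp)
    · intro q hq
      simp only [mem_filter, mem_univ, true_and] at hq
      rw [hq, ← map_mul]
      congr 1
      ring
  have hKP : K = ∑ q : F × F, χ (q.1 * q.2) * χ (q.1 - q.2 + 2) := by
    rw [hKdef, ← Finset.sum_erase_add univ _ (mem_univ (0 : F)), hK0, add_zero,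
      Finset.sum_congr rfl (fun x hx => hKx x (Finset.mem_erase.mp hx).1)]
    have hzero : ∑ q ∈ (univ : Finset (F × F)).filter (fun q => q.1 * q.2 = (0 : F)),
        χ (q.1 * q.2) * χ (q.1 - q.2 + 2) = 0 := by
      refine Finset.sum_eq_zero fun q hq => ?_
      rw [(Finset.mem_filter.mp hq).2, MulChar.map_zero, zero_mul]
    have hfib := Finset.sum_fiberwise univ (fun q : F × F => q.1 * q.2)
      (fun q => χ (q.1 * q.2) * χ (q.1 - q.2 + 2))
    calc ∑ x ∈ univ.erase (0 : F),
        ∑ q ∈ (univ : Finset (F × F)).filter (fun q => q.1 * q.2 = x),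
          χ (q.1 * q.2) * χ (q.1 - q.2 + 2)
        = ∑ x : F, ∑ q ∈ (univ : Finset (F × F)).filter (fun q => q.1 * q.2 = x),
            χ (q.1 * q.2) * χ (q.1 - q.2 + 2) := by
          rw [← Finset.sum_erase_add univ _ (mem_univ (0 : F)), hzero, add_zero]
    _ = ∑ q : F × F, χ (q.1 * q.2) * χ (q.1 - q.2 + 2) := hfib
  -- Step 6: evaluate P
  have hP : ∑ q : F × F, χ (q.1 * q.2) * χ (q.1 - q.2 + 2)
      = χ (-4) * χ 2 * ∑ p : F × F, χ p.1 * χ p.2 * χ (1 - p.1 - p.2) := by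
    have hm2 : (-2 : F) ≠ 0 := neg_ne_zero.mpr h2
    have hbij : Function.Bijective (fun p : F × F => ((-2 : F) * p.1, (2 : F) * p.2)) := by
      refine Finite.injective_iff_bijective.mp fun p p' hpp => ?_
      obtain ⟨ha, hb⟩ := Prod.ext_iff.mp hpp
      simp only at ha hb
      exact Prod.ext (mul_left_cancel₀ hm2 ha) (mul_left_cancel₀ h2 hb)
    rw [Finset.mul_sum]
    refine (Fintype.sum_bijective _ hbij
      (fun p : F × F => χ (-4) * χ 2 * (χ p.1 * χ p.2 * χ (1 - p.1 - p.2)))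
      (fun q : F × F => χ (q.1 * q.2) * χ (q.1 - q.2 + 2)) (fun p => ?_)).symm
    show χ (-4) * χ 2 * (χ p.1 * χ p.2 * χ (1 - p.1 - p.2))
        = χ ((-2 : F) * p.1 * (2 * p.2)) * χ ((-2 : F) * p.1 - 2 * p.2 + 2)
    rw [show (-2 : F) * p.1 * (2 * p.2) = (-4) * (p.1 * p.2) by ring,
      show (-2 : F) * p.1 - 2 * p.2 + 2 = 2 * (1 - p.1 - p.2) by ring,
      map_mul, map_mul, map_mul]
    ring
  rw [hKP, hP]
  -- Step 7: reindex jacobi sum and collect constants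
  have hjac : ∑ p : F × F, χ p.1 * χ p.2 * χ (1 - p.1 - p.2)
      = ∑ v ∈ (univ : Finset (F × F × F)).filter (fun v => v.1 + v.2.1 + v.2.2 = 1),
          χ v.1 * χ v.2.1 * χ v.2.2 := by
    refine Finset.sum_nbij' (i := fun p : F × F => (p.1, p.2, 1 - p.1 - p.2))
      (j := fun v : F × F × F => (v.1, v.2.1)) ?_ ?_ ?_ ?_ ?_
    · intro p _
      simp only [mem_filter, mem_univ, true_and]
      ring
    · intro v _
      exact mem_univ _
    · intro p _
      rfl
    · intro v hv
      simp only [mem_filter, mem_univ, true_and] at hv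
      have h3 : 1 - v.1 - v.2.1 = v.2.2 := by linear_combination -hv
      exact Prod.ext rfl (Prod.ext rfl h3)
    · intro p _
      rfl
  rw [hjac]
  have hconst : χ 4⁻¹ * (χ 2⁻¹ * (χ (-4) * χ 2)) = χ (-1) := by
    rw [← map_mul, ← map_mul, ← map_mul]
    congr 1
    field_simp
  ring_nf
  rw [← hconst]
  ring

end Aux

/-- Let `F` be a finite field of odd characteristic with quadratic character `λ`, and let
`d ≥ 1` be an integer coprime to `|F|`.  Then
`∑_{τ ∈ F} ∑_{x ∈ F} λ(x³ + x² − 8·τ^d·x + 16·τ^(2d)) = ∑_χ χ(−1)·j_F(χ, χ, χ)`, where the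
sum on the right ranges over the nontrivial multiplicative characters `χ` of `F` with
`χ^d = 𝟙`. -/
theorem charSum_hessian_fibres (F : Type*) [Field F] [Fintype F] [DecidableEq F]
    (hodd : ringChar F ≠ 2)
    (lam : MulChar F ℂ) (hlam : orderOf lam = 2)
    (d : ℕ) (hd : 1 ≤ d) (hcop : Nat.Coprime d (Fintype.card F)) :
    ∑ τ : F, ∑ x : F,
        lam (x ^ 3 + x ^ 2 - 8 * τ ^ d * x + 16 * τ ^ (2 * d)) =
      ∑ᶠ χ ∈ {χ : MulChar F ℂ | χ ≠ 1 ∧ χ ^ d = 1},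
        χ (-1) * jacobiSum₃ χ χ χ := by
  classical
  haveI : Fintype (MulChar F ℂ) := Fintype.ofFinite _
  have hd0 : d ≠ 0 := by omega
  set f : F → ℂ := fun t => ∑ x : F, lam (x ^ 3 + x ^ 2 - 8 * t * x + 16 * t ^ 2) with hf
  have hLHS : ∑ τ : F, ∑ x : F, lam (x ^ 3 + x ^ 2 - 8 * τ ^ d * x + 16 * τ ^ (2 * d))
      = ∑ τ : F, f (τ ^ d) := by
    refine Finset.sum_congr rfl fun τ _ => ?_
    refine Finset.sum_congr rfl fun x _ => ?_
    congr 2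
    rw [mul_comm 2 d, pow_mul]
  rw [hLHS,
    ← Finset.sum_fiberwise univ (fun τ : F => τ ^ d) (fun τ => f (τ ^ d))]
  have hper : ∀ t : F, ∑ τ ∈ univ.filter (fun τ : F => τ ^ d = t), f (τ ^ d)
      = ((univ.filter (fun τ : F => τ ^ d = t)).card : ℂ) * f t := by
    intro t
    rw [Finset.sum_congr rfl (fun τ hτ => by rw [(mem_filter.mp hτ).2]),
      Finset.sum_const, nsmul_eq_mul]
  rw [Finset.sum_congr rfl fun t _ => hper t,
    ← Finset.sum_erase_add univ _ (mem_univ (0 : F))]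
  have hfil0 : (univ.filter (fun τ : F => τ ^ d = (0 : F))) = {0} := by
    ext τ
    simp [pow_eq_zero_iff hd0]
  rw [hfil0, Finset.card_singleton, Nat.cast_one, one_mul]
  have horth : ∀ t ∈ univ.erase (0 : F),
      ((univ.filter (fun τ : F => τ ^ d = t)).card : ℂ) * f t
      = ∑ χ ∈ univ.filter (fun χ : MulChar F ℂ => χ ^ d = 1), χ t * f t := by
    intro t ht
    rw [← orth_aux hd0 (Finset.mem_erase.mp ht).1, Finset.sum_mul]
  rw [Finset.sum_congr rfl horth, Finset.sum_comm]
  have hback : ∀ χ : MulChar F ℂ,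
      ∑ t ∈ univ.erase (0 : F), χ t * f t = ∑ t : F, χ t * f t := by
    intro χ
    rw [← Finset.sum_erase_add univ _ (mem_univ (0 : F)), MulChar.map_zero, zero_mul,
      add_zero]
  rw [Finset.sum_congr rfl fun χ _ => hback χ]
  have h1mem : (1 : MulChar F ℂ) ∈ univ.filter (fun χ : MulChar F ℂ => χ ^ d = 1) :=
    mem_filter.mpr ⟨mem_univ _, one_pow d⟩
  rw [← Finset.add_sum_erase _ _ h1mem]
  have hT1 : ∑ t : F, (1 : MulChar F ℂ) t * f t = -f 0 := by
    have hpt : ∀ t : F, (1 : MulChar F ℂ) t * f t = f t - (if t = 0 then f 0 else 0) := by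
      intro t
      by_cases ht : t = 0
      · subst ht
        rw [MulChar.map_zero, zero_mul, if_pos rfl]
        ring
      · rw [MulChar.one_apply (isUnit_iff_ne_zero.mpr ht), one_mul, if_neg ht, sub_zero]
    rw [Finset.sum_congr rfl fun t _ => hpt t, Finset.sum_sub_distrib,
      Finset.sum_ite_eq' univ (0 : F) (fun _ => f 0), if_pos (mem_univ _),
      show ∑ t : F, f t = 0 from factD hodd lam hlam]
    ring
  rw [hT1]
  have hE : ∀ χ ∈ (univ.filter (fun χ : MulChar F ℂ => χ ^ d = 1)).erase 1,
      ∑ t : F, χ t * f t = χ (-1) * jacobiSum₃ χ χ χ :=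
    fun χ hχ => factE hodd lam hlam (Finset.mem_erase.mp hχ).1
  rw [Finset.sum_congr rfl hE]
  have hset : {χ : MulChar F ℂ | χ ≠ 1 ∧ χ ^ d = 1}
      = (((univ.filter (fun χ : MulChar F ℂ => χ ^ d = 1)).erase 1 :
          Finset (MulChar F ℂ)) : Set (MulChar F ℂ)) := by
    ext χ
    simp only [Set.mem_setOf_eq, Finset.coe_erase, Set.mem_diff, Finset.mem_coe,
      mem_filter, mem_univ, true_and, Set.mem_singleton_iff]
    tauto
  rw [hset, finsum_mem_coe_finset]
  ring
end

section
/- Let q be a prime power, let d ≥ 2 be an integer coprime to q, let n ≥ 1, and let E be a finite field with q^n elements. Let χ be a nontrivial multiplicative character of E (a homomorphism E^× → ℂ^×) with χ^d = 𝟙, let e > 1 be the order of χ, and let j be the multiplicative order of q modulo e. Then j divides n, and there exists a multiplicative character χ₀ of exact order e on the (unique) subfield F of E with q^j elements such that χ = χ₀ ∘ N_{E/F}, where N_{E/F} : E^× → F^× denotes the field norm of the extension E/F. -/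
/-!
Write `q = p ^ k` and `Q = q ^ j - 1`. Since `e` divides `#Eˣ = q ^ n - 1`, we get
`q ^ n ≡ 1 (mod e)`, hence `j ∣ n`, `e ∣ Q` and `q ^ n - 1 = m Q`. Let `F` be the field of fixed
points of `x ↦ x ^ q ^ j`; its units are the `Q`-th roots of unity of `E`. In the cyclic group
`Eˣ` of order `m Q` these form the image of `x ↦ x ^ m`, so `F` has `q ^ j` elements and the norm
`x ↦ x ^ m` maps `Eˣ` onto `Fˣ`. Its kernel is the image of `x ↦ x ^ Q`, on which `χ` is trivial
because `χ ^ Q = 1`. So `χ` factors through the norm, and the factor has the same order as `χ`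
because precomposition with a surjection is injective.
-/

theorem IsCyclic.range_powMonoidHom_eq_ker_powMonoidHom {G : Type*} [CommGroup G] [IsCyclic G]
    [Finite G] {a b : ℕ} (hab : a * b = Nat.card G) :
    (powMonoidHom a : G →* G).range = (powMonoidHom b).ker := by
  have ha : a ≠ 0 := by
    rintro rfl
    exact Nat.card_pos.ne' (hab.symm.trans (zero_mul b))
  refine Subgroup.eq_of_le_of_card_ge ?_ ?_
  · rintro _ ⟨x, rfl⟩
    rw [MonoidHom.mem_ker, powMonoidHom_apply, powMonoidHom_apply, ← pow_mul, hab,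
      pow_card_eq_one']
  · rw [card_powMonoidHom_ker, card_powMonoidHom_range, ← hab, Nat.gcd_mul_left_left,
      Nat.gcd_mul_right_left, Nat.mul_div_cancel_left b (Nat.pos_of_ne_zero ha)]

theorem MonoidHom.orderOf_comp_of_surjective {G H A : Type*} [Monoid G] [Monoid H]
    [CommMonoid A] {f : G →* H} (hf : Function.Surjective f) (φ : H →* A) :
    orderOf (φ.comp f) = orderOf φ :=
  orderOf_injective (compHom' f) (fun _ _ h ↦ (cancel_right hf).1 h) φ

theorem ZMod.orderOf_natCast_dvd_iff {q e n : ℕ} (hq : 1 ≤ q) :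
    orderOf (q : ZMod e) ∣ n ↔ e ∣ q ^ n - 1 := by
  rw [orderOf_dvd_iff_pow_eq_one, ← natCast_eq_zero_iff, Nat.cast_sub (Nat.one_le_pow _ _ hq),
    sub_eq_zero, Nat.cast_pow, Nat.cast_one]

namespace FiniteField

theorem charP_of_card_eq_prime_pow {K : Type*} [Field K] [Fintype K] {p r : ℕ} (hp : p.Prime)
    (hK : Fintype.card K = p ^ r) : CharP K p := by
  obtain ⟨p', hchar, n, hp', hcard⟩ := FiniteField.card' K
  have hdvd : p' ∣ p ^ r := hK ▸ hcard ▸ dvd_pow_self p' n.ne_zero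
  rwa [(Nat.prime_dvd_prime_iff_eq hp' hp).1 (hp'.dvd_of_dvd_pow hdvd)] at hchar

section FrobeniusFixedField

def frobeniusFixedField (K : Type*) [Field K] (p t : ℕ) [ExpChar K p] : Subfield K :=
  (iterateFrobenius K p t).eqLocusField (RingHom.id K)

variable {K : Type*} [Field K] (p t : ℕ) [ExpChar K p]

local notation "𝔽" => frobeniusFixedField K p t

theorem mem_frobeniusFixedField {x : K} : x ∈ 𝔽 ↔ x ^ p ^ t = x :=
  Iff.rfl

theorem coe_unit_mem_frobeniusFixedField_iff (u : Kˣ) : (u : K) ∈ 𝔽 ↔ u ^ (p ^ t - 1) = 1 := by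
  obtain ⟨s, hs⟩ : ∃ s, p ^ t = s + 1 :=
    ⟨p ^ t - 1, (Nat.sub_add_cancel (expChar_pow_pos K p t)).symm⟩
  rw [mem_frobeniusFixedField, ← Units.val_pow_eq_pow_val, Units.val_inj, hs, Nat.add_sub_cancel,
    pow_succ, mul_eq_right]

theorem range_unitsMap_subtype_frobeniusFixedField :
    (Units.map ((𝔽).subtype : 𝔽 →* K)).range = (powMonoidHom (p ^ t - 1)).ker := by
  ext u
  rw [MonoidHom.mem_ker, powMonoidHom_apply, ← coe_unit_mem_frobeniusFixedField_iff]
  constructor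
  · rintro ⟨w, rfl⟩
    exact (w : 𝔽).2
  · intro hu
    exact ⟨Units.mk0 ⟨u, hu⟩ (Subtype.coe_ne_coe.1 u.ne_zero), Units.ext rfl⟩

theorem pow_mem_frobeniusFixedField {m : ℕ} (hm : m * (p ^ t - 1) = Nat.card K - 1) (x : K) :
    x ^ m ∈ 𝔽 := by
  rcases eq_or_ne x 0 with rfl | hx
  · exact pow_mem (zero_mem _) m
  · rw [← Units.val_mk0 hx, ← Units.val_pow_eq_pow_val, coe_unit_mem_frobeniusFixedField_iff,
      ← pow_mul, hm, ← Nat.card_units, pow_card_eq_one']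

variable [Finite K]

theorem natCard_frobeniusFixedField {m : ℕ} (hm : m * (p ^ t - 1) = Nat.card K - 1) :
    Nat.card 𝔽 = p ^ t := by
  have hι := Units.map_injective (f := ((𝔽).subtype : 𝔽 →* K)) Subtype.val_injective
  rw [Nat.card_eq_card_units_add_one, Nat.card_congr (MonoidHom.ofInjective hι).toEquiv,
    range_unitsMap_subtype_frobeniusFixedField, IsCyclic.card_powMonoidHom_ker, Nat.card_units,
    Nat.gcd_eq_right (Dvd.intro_left m hm), Nat.sub_add_cancel (expChar_pow_pos K p t)]

def normFrobeniusFixedField {m : ℕ} (hm : m * (p ^ t - 1) = Nat.card K - 1) : K →*₀ 𝔽 where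
  toFun x := ⟨x ^ m, pow_mem_frobeniusFixedField p t hm x⟩
  map_zero' := by
    have hm0 : m ≠ 0 := by
      rintro rfl
      exact (Nat.sub_pos_of_lt Finite.one_lt_card).ne' (hm.symm.trans (zero_mul _))
    exact Subtype.ext (zero_pow hm0)
  map_one' := Subtype.ext (one_pow m)
  map_mul' x y := Subtype.ext (mul_pow x y m)

variable {m : ℕ} (hm : m * (p ^ t - 1) = Nat.card K - 1)

theorem unitsMap_subtype_comp_unitsMap_normFrobeniusFixedField :
    (Units.map ((𝔽).subtype : 𝔽 →* K)).comp
      (Units.map (normFrobeniusFixedField p t hm : K →* 𝔽)) = powMonoidHom m := by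
  ext; rfl

theorem surjective_unitsMap_normFrobeniusFixedField :
    Function.Surjective (Units.map (normFrobeniusFixedField p t hm : K →* 𝔽)) := by
  have hι := Units.map_injective (f := ((𝔽).subtype : 𝔽 →* K)) Subtype.val_injective
  intro w
  obtain ⟨u, hu⟩ : Units.map ((𝔽).subtype : 𝔽 →* K) w ∈ (powMonoidHom m : Kˣ →* Kˣ).range := by
    rw [IsCyclic.range_powMonoidHom_eq_ker_powMonoidHom (hm.trans (Nat.card_units K).symm),
      ← range_unitsMap_subtype_frobeniusFixedField]
    exact ⟨w, rfl⟩
  refine ⟨u, hι ?_⟩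
  rw [← hu, ← unitsMap_subtype_comp_unitsMap_normFrobeniusFixedField p t hm]
  rfl

theorem ker_unitsMap_normFrobeniusFixedField :
    (Units.map (normFrobeniusFixedField p t hm : K →* 𝔽)).ker =
      (powMonoidHom (p ^ t - 1)).range := by
  have hι := Units.map_injective (f := ((𝔽).subtype : 𝔽 →* K)) Subtype.val_injective
  rw [IsCyclic.range_powMonoidHom_eq_ker_powMonoidHom
    ((mul_comm _ _).trans (hm.trans (Nat.card_units K).symm)),
    ← unitsMap_subtype_comp_unitsMap_normFrobeniusFixedField p t hm,
    MonoidHom.ker_comp_of_injective _ _ hι]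

theorem exists_mulChar_eq_comp_normFrobeniusFixedField {R : Type*} [CommMonoidWithZero R]
    [Nontrivial R] (χ : MulChar K R) (hχ : χ ^ (p ^ t - 1) = 1) :
    ∃ χ₀ : MulChar 𝔽 R, orderOf χ₀ = orderOf χ ∧
      ∀ x, χ x = χ₀ (normFrobeniusFixedField p t hm x) := by
  set f := Units.map (normFrobeniusFixedField p t hm : K →* 𝔽)
  have hsurj := surjective_unitsMap_normFrobeniusFixedField p t hm
  set ψ := MulChar.mulEquivToUnitHom χ
  have hker : f.ker ≤ ψ.ker := by
    rw [ker_unitsMap_normFrobeniusFixedField]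
    rintro _ ⟨u, rfl⟩
    rw [MonoidHom.mem_ker, powMonoidHom_apply, map_pow, ← MonoidHom.pow_apply, ← map_pow, hχ,
      map_one, MonoidHom.one_apply]
  set ψ₀ := f.liftOfSurjective hsurj ⟨ψ, hker⟩
  have hcomp : ψ₀.comp f = ψ := f.liftOfRightInverse_comp _ _ _
  refine ⟨MulChar.mulEquivToUnitHom.symm ψ₀, ?_, fun x ↦ ?_⟩
  · rw [MulEquiv.orderOf_eq, ← MonoidHom.orderOf_comp_of_surjective hsurj, hcomp,
      MulEquiv.orderOf_eq]
  rcases eq_or_ne x 0 with rfl | hx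
  · rw [MulChar.map_zero, (normFrobeniusFixedField p t hm).map_zero, MulChar.map_zero]
  · have h := congr_arg Units.val (DFunLike.congr_fun hcomp (Units.mk0 x hx))
    calc χ x = ψ₀ (f (Units.mk0 x hx)) := (h.trans (MulChar.coe_equivToUnitHom χ _)).symm
      _ = _ := (MulChar.equivToUnitHom_symm_coe ψ₀ _).symm

end FrobeniusFixedField

end FiniteField

theorem mulChar_eq_lift_of_norm_general (q n : ℕ) (hq : IsPrimePow q)
    (E : Type*) [Field E] [Fintype E] (hE : Fintype.card E = q ^ n)
    (χ : MulChar E ℂ) (hχ : χ ≠ 1)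
    (e : ℕ) (he : e = orderOf χ)
    (j : ℕ) (hj : j = orderOf (q : ZMod e)) :
    1 < e ∧ j ∣ n ∧
      ∃ F : Subfield E, Nat.card F = q ^ j ∧
        ∃ χ₀ : MulChar F ℂ, orderOf χ₀ = e ∧
          ∀ x : E, ∃ hx : x ^ ((q ^ n - 1) / (q ^ j - 1)) ∈ F,
            χ x = χ₀ ⟨x ^ ((q ^ n - 1) / (q ^ j - 1)), hx⟩ := by
  obtain ⟨p, k, hp, -, hpk⟩ := hq
  have : Fact p.Prime := ⟨hp.nat_prime⟩
  have : CharP E p :=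
    FiniteField.charP_of_card_eq_prime_pow hp.nat_prime (by rw [hE, ← hpk, pow_mul])
  have hq : 1 ≤ q := hpk ▸ Nat.one_le_pow _ _ hp.nat_prime.pos
  have hqt : p ^ (k * j) = q ^ j := by rw [pow_mul, hpk]
  have he1 : 1 < e := by
    have := orderOf_pos χ
    have := mt orderOf_eq_one_iff.1 hχ
    omega
  have heN : e ∣ q ^ n - 1 := hE ▸ he ▸ χ.orderOf_dvd_card_sub_one
  have hjn : j ∣ n := hj ▸ (ZMod.orderOf_natCast_dvd_iff hq).2 heN
  have heQ : e ∣ q ^ j - 1 := (ZMod.orderOf_natCast_dvd_iff hq).1 (hj ▸ dvd_rfl)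
  have hm : (q ^ n - 1) / (q ^ j - 1) * (p ^ (k * j) - 1) = Nat.card E - 1 := by
    rw [hqt, Nat.card_eq_fintype_card, hE,
      Nat.div_mul_cancel (Nat.pow_sub_one_dvd_pow_sub_one q hjn)]
  obtain ⟨χ₀, hord, hχ₀⟩ := FiniteField.exists_mulChar_eq_comp_normFrobeniusFixedField p (k * j)
    hm χ (orderOf_dvd_iff_pow_eq_one.1 (hqt ▸ he ▸ heQ))
  exact ⟨he1, hjn, _, (FiniteField.natCard_frobeniusFixedField p (k * j) hm).trans hqt, χ₀,
    hord.trans he.symm, fun x ↦ ⟨_, hχ₀ x⟩⟩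

/-- Let `q` be a prime power, `d ≥ 2` an integer coprime to `q`, `n ≥ 1`, and `E` a finite
field with `q^n` elements.  Let `χ` be a nontrivial multiplicative character of `E` with
`χ^d = 𝟙`, let `e > 1` be the order of `χ`, and let `j` be the multiplicative order of `q`
modulo `e`.  Then `j ∣ n`, and there is a multiplicative character `χ₀` of exact order `e`
on the (unique) subfield `F` of `E` with `q^j` elements such that `χ = χ₀ ∘ N_{E/F}`, where
the norm is given by `N_{E/F}(x) = x^((|E|−1)/(|F|−1))`. -/
theorem mulChar_eq_lift_of_norm (q d n : ℕ) (hq : IsPrimePow q)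
    (hd : 2 ≤ d) (hcop : Nat.Coprime d q) (hn : 1 ≤ n)
    (E : Type*) [Field E] [Fintype E] [DecidableEq E] (hE : Fintype.card E = q ^ n)
    (χ : MulChar E ℂ) (hχ : χ ≠ 1) (hχd : χ ^ d = 1)
    (e : ℕ) (he : e = orderOf χ)
    (j : ℕ) (hj : j = orderOf (q : ZMod e)) :
    1 < e ∧ j ∣ n ∧
      ∃ F : Subfield E, Nat.card F = q ^ j ∧
        ∃ χ₀ : MulChar F ℂ, orderOf χ₀ = e ∧
          ∀ x : E, ∃ hx : x ^ ((q ^ n - 1) / (q ^ j - 1)) ∈ F,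
            χ x = χ₀ ⟨x ^ ((q ^ n - 1) / (q ^ j - 1)), hx⟩ :=
  mulChar_eq_lift_of_norm_general q n hq E hE χ hχ e he j hj
end
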